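/- arXiv:2504.04757 — 7 statements merged into one kernel-verified Lean document; each statement's English description precedes it below -/
import Mathlib

section
/- Let S and T be strings, let j be an index with 1 ≤ j ≤ |T|, and let i be an index such that T[1..j] is a subsequence of S[1..i] but T[1..j+1] is not a subsequence of S[1..i]. Then T is a subsequence of S if and only if T[j+1..|T|] is a subsequence of S[i+1..|S|]. -/
lemma aux_drop {α : Type*} {T S : List α} (h : T.Sublist S) :
    ∀ i k : ℕ, ¬ (T.take (k + 1)).Sublist (S.take i) →
      (T.drop k).Sublist (S.drop i) := by
  induction h with
  | slnil => intro i k h2; exact absurd (by simp) h2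
  | cons a h ih =>
      intro i k h2
      cases i with
      | zero =>
          exact (List.drop_sublist k _).trans (h.trans (List.sublist_cons_self a _))
      | succ i' =>
          simpa using ih i' k (fun hs => h2 (by simpa using hs.trans (List.sublist_cons_self a _)))
  | cons_cons a h ih =>
      intro i k h2
      rename_i T' S'
      cases i with
      | zero =>
          exact (List.drop_sublist k _).trans (List.cons_sublist_cons.mpr h)
      | succ i' =>
          cases k with
          | zero => exact absurd (by simpa using (List.nil_sublist _).cons₂ a) h2
          | succ k' =>
              have h2' : ¬ (T'.take (k' + 1)).Sublist (S'.take i') := fun hs =>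
                h2 (by simpa using hs.cons₂ a)
              simpa using ih i' k' h2'

/-- If T[1..j] is a subsequence of S[1..i] but T[1..j+1] is not,
then T is a subsequence of S iff T[j+1..] is a subsequence of S[i+1..]. -/
theorem stmt_0 {α : Type*} (S T : List α) (i j : ℕ)
    (hj1 : 1 ≤ j) (hj : j < T.length)
    (h1 : (T.take j).Sublist (S.take i))
    (h2 : ¬ (T.take (j + 1)).Sublist (S.take i)) :
    T.Sublist S ↔ (T.drop j).Sublist (S.drop i) := by
  constructor
  · intro h; exact aux_drop h i j h2
  · intro h
    have := h1.append h
    simpa using this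
end

section
/- Let R = x_v x̄_v ⋯ x_1 x̄_1 be the string listing 2v distinct characters in reversed-index order, and let W = c_{i+1} c_{i+2} ⋯ c_v be any string of length v − i where each c_j ∈ {x_j, x̄_j}. Then W is not a subsequence of R^{v−i−1} (the concatenation of v−i−1 copies of R). -/
/-- The character `(j, true)` stands for `x_j` and `(j, false)` for `x̄_j`. -/
def Rstr (v : ℕ) : List (ℕ × Bool) :=
  List.flatten (((List.range v).reverse).map fun j => [(j + 1, true), (j + 1, false)])

/-- k-fold concatenation of `Rstr v`. -/
def Rpow (v k : ℕ) : List (ℕ × Bool) :=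
  List.flatten (List.replicate k (Rstr v))

lemma Rstr_succ (v : ℕ) :
    Rstr (v + 1) = [(v + 1, true), (v + 1, false)] ++ Rstr v := by
  simp [Rstr, List.range_succ]

lemma mem_Rstr_le (v : ℕ) : ∀ p ∈ Rstr v, p.1 ≤ v := by
  induction v with
  | zero => simp [Rstr]
  | succ n ih =>
    intro p hp
    rw [Rstr_succ] at hp
    rcases List.mem_append.1 hp with h | h
    · simp only [List.mem_cons, List.mem_singleton, List.not_mem_nil, or_false] at h
      rcases h with h | h <;> simp [h]
    · exact le_trans (ih p h) (Nat.le_succ n)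

lemma Rstr_pairwise (v : ℕ) :
    List.Pairwise (fun a b : ℕ × Bool => b.1 ≤ a.1) (Rstr v) := by
  induction v with
  | zero => simp [Rstr]
  | succ n ih =>
    rw [Rstr_succ]
    refine List.pairwise_append.2 ⟨?_, ih, ?_⟩
    · simp
    · intro a ha b hb
      have hb' : b.1 ≤ n := mem_Rstr_le n b hb
      simp only [List.mem_cons, List.mem_singleton, List.not_mem_nil, or_false] at ha
      rcases ha with h | h <;> simp [h] <;> omega

lemma incr_sublist_len (v : ℕ) : ∀ k (W : List (ℕ × Bool)),
    List.Pairwise (fun a b : ℕ × Bool => a.1 < b.1) W →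
    W.Sublist (Rpow v k) → W.length ≤ k := by
  intro k
  induction k with
  | zero =>
    intro W _ h
    simp only [Rpow, List.replicate_zero, List.flatten_nil, List.sublist_nil] at h
    simp [h]
  | succ n ih =>
    intro W hp h
    have : Rpow v (n + 1) = Rstr v ++ Rpow v n := by
      simp [Rpow, List.replicate_succ]
    rw [this] at h
    rcases List.sublist_append_iff.1 h with ⟨W1, W2, rfl, h1, h2⟩
    have hW1 : W1.length ≤ 1 := by
      by_contra hc
      push_neg at hc
      match W1, hc with
      | a :: b :: t, _ =>
        have hab : a.1 < b.1 := by
          have := List.pairwise_cons.1 (hp.sublist (List.sublist_append_left _ W2))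
          exact this.1 b (by simp)
        have hba : b.1 ≤ a.1 := by
          have := List.pairwise_cons.1 ((Rstr_pairwise v).sublist h1)
          exact this.1 b (by simp)
        omega
    have hW2 : W2.length ≤ n :=
      ih W2 (hp.sublist (List.sublist_append_right W1 W2)) h2
    simp only [List.length_append]
    omega

/-- A string W = c_{i+1} ⋯ c_v with c_j ∈ {x_j, x̄_j} is not a
subsequence of R^{v-i-1}, where R = x_v x̄_v ⋯ x_1 x̄_1. -/
theorem stmt_5 (v i : ℕ) (hi : i < v) (W : List (ℕ × Bool))
    (hlen : W.length = v - i)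
    (hW : ∀ m : Fin W.length, (W.get m).1 = i + 1 + (m : ℕ)) :
    ¬ W.Sublist (Rpow v (v - i - 1)) := by
  intro h
  have hp : List.Pairwise (fun a b : ℕ × Bool => a.1 < b.1) W := by
    rw [List.pairwise_iff_get]
    intro a b hab
    rw [hW a, hW b]
    omega
  have := incr_sublist_len v (v - i - 1) W hp h
  omega
end

section
/- Let φ be a satisfiable 3-CNF formula over variables x_1,...,x_v with satisfying assignment f, and define the string S = s_1 s_2 ⋯ s_v where s_j = x_j if f(x_j) = True and s_j = x̄_j otherwise. Then S is a common subsequence of the set S(φ) = {S_0, S_1, ..., S_m}, where S_0 = x_1 x̄_1 ⋯ x_v x̄_v and for each clause C_i = ℓ₁ ∨ ℓ₂ ∨ ℓ₃ with ℓ₁ ∈ {x_α, x̄_α}, ℓ₂ ∈ {x_β, x̄_β}, ℓ₃ ∈ {x_γ, x̄_γ}, α < β < γ, S_i = R^{α−1} ℓ₁ R^{β−α} ℓ₂ R^{γ−β} ℓ₃ R^{v−γ} with R = x_v x̄_v ⋯ x_1 x̄_1. -/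
/-- The string S_0 = x_1 x̄_1 x_2 x̄_2 ⋯ x_v x̄_v. -/
def S0 (v : ℕ) : List (ℕ × Bool) :=
  List.flatten ((List.range v).map fun j => [(j + 1, true), (j + 1, false)])

/-- A 3-clause ℓ₁ ∨ ℓ₂ ∨ ℓ₃ with ℓ₁ ∈ {x_a, x̄_a}, ℓ₂ ∈ {x_b, x̄_b},
ℓ₃ ∈ {x_c, x̄_c}; `pa = true` means the literal on variable `a` is positive. -/
structure Clause3 where
  a : ℕ
  b : ℕ
  c : ℕ
  pa : Bool
  pb : Bool
  pc : Bool

/-- The clause string S_C = R^{a-1} ℓ₁ R^{b-a} ℓ₂ R^{c-b} ℓ₃ R^{v-c}. -/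
def SC (v : ℕ) (C : Clause3) : List (ℕ × Bool) :=
  Rpow v (C.a - 1) ++ [(C.a, C.pa)] ++ Rpow v (C.b - C.a) ++ [(C.b, C.pb)]
    ++ Rpow v (C.c - C.b) ++ [(C.c, C.pc)] ++ Rpow v (v - C.c)

lemma mem_Rstr (v j : ℕ) (b : Bool) (h1 : 1 ≤ j) (h2 : j ≤ v) : (j, b) ∈ Rstr v := by
  simp only [Rstr, List.mem_flatten, List.mem_map, List.mem_reverse, List.mem_range]
  have hj : j - 1 + 1 = j := by omega
  exact ⟨[(j, true), (j, false)], ⟨j - 1, by omega, by rw [hj]⟩, by cases b <;> simp⟩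

lemma sublist_Rpow (v : ℕ) (l : List (ℕ × Bool)) (h : ∀ x ∈ l, x ∈ Rstr v) :
    l.Sublist (Rpow v l.length) := by
  induction l with
  | nil => simp
  | cons x t ih =>
    have he : Rpow v (t.length + 1) = Rstr v ++ Rpow v t.length := by
      simp [Rpow, List.replicate_succ]
    rw [List.length_cons, he, ← List.singleton_append]
    exact (List.singleton_sublist.2 (h x (by simp))).append
      (ih fun y hy => h y (by simp [hy]))

lemma seg_sublist (v lo len : ℕ) (f : ℕ → Bool) (h1 : 1 ≤ lo) (h2 : lo + len ≤ v + 1) :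
    ((List.range' lo len).map (fun j => (j, f j))).Sublist (Rpow v len) := by
  have := sublist_Rpow v ((List.range' lo len).map (fun j => (j, f j))) (by
    intro x hx
    simp only [List.mem_map, List.mem_range'_1] at hx
    obtain ⟨j, ⟨hj1, hj2⟩, rfl⟩ := hx
    exact mem_Rstr v j (f j) (by omega) (by omega))
  simpa using this

lemma cat (s m t n : ℕ) (h : t = s + m) :
    List.range' s m ++ List.range' t n = List.range' s (m + n) := by
  subst h
  have := @List.range'_append s m n 1
  simpa [Nat.add_comm] using this

lemma seg_one (f : ℕ → Bool) (j : ℕ) :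
    (List.range' j 1).map (fun k => (k, f k)) = [(j, f j)] := by
  rw [List.range'_one]; rfl

lemma sub_S0 (f : ℕ → Bool) (v : ℕ) :
    ((List.range v).map (fun j => (j + 1, f (j + 1)))).Sublist (S0 v) := by
  induction v with
  | zero => simp [S0]
  | succ n ih =>
    rw [List.range_succ, List.map_append]
    have hs : S0 (n + 1) = S0 n ++ [(n + 1, true), (n + 1, false)] := by
      simp [S0, List.range_succ]
    rw [hs]
    refine ih.append ?_
    simp only [List.map_cons, List.map_nil]
    cases h : f (n + 1) <;> simp

/-- for a satisfying assignment f of the 3-CNF formula with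
clauses `cs`, the string S = s_1 ⋯ s_v with s_j = x_j if f(x_j) and s_j = x̄_j
otherwise is a common subsequence of {S_0, S_1, ..., S_m}. -/
theorem stmt_7 (v : ℕ) (cs : List Clause3)
    (hvalid : ∀ C ∈ cs, 1 ≤ C.a ∧ C.a < C.b ∧ C.b < C.c ∧ C.c ≤ v)
    (f : ℕ → Bool)
    (hsat : ∀ C ∈ cs, f C.a = C.pa ∨ f C.b = C.pb ∨ f C.c = C.pc) :
    ((List.range v).map (fun j => (j + 1, f (j + 1)))).Sublist (S0 v) ∧
    ∀ C ∈ cs, ((List.range v).map (fun j => (j + 1, f (j + 1)))).Sublist (SC v C) := by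
  constructor
  · exact sub_S0 f v
  intro C hC
  obtain ⟨ha, hab, hbc, hcv⟩ := hvalid C hC
  have hS : (List.range v).map (fun j => (j + 1, f (j + 1)))
      = (List.range' 1 v).map (fun j => (j, f j)) := by
    rw [List.range'_eq_map_range, List.map_map]
    exact List.map_congr_left fun j _ => by simp [Nat.add_comm]
  rw [hS]
  rcases hsat C hC with h | h | h
  · -- first literal satisfied
    have hsplit : List.range' 1 v =
        List.range' 1 (C.a - 1) ++ (List.range' C.a 1 ++ (List.range' (C.a + 1) (C.b - C.a)
          ++ (List.range' (C.b + 1) (C.c - C.b) ++ List.range' (C.c + 1) (v - C.c)))) := by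
      rw [cat (C.b + 1) (C.c - C.b) (C.c + 1) (v - C.c) (by omega),
          cat (C.a + 1) (C.b - C.a) (C.b + 1) _ (by omega),
          cat C.a 1 (C.a + 1) _ (by omega),
          cat 1 (C.a - 1) C.a _ (by omega)]
      congr 1
      omega
    have hSC : SC v C = Rpow v (C.a - 1) ++ ([(C.a, C.pa)] ++ (Rpow v (C.b - C.a)
        ++ (([(C.b, C.pb)] ++ Rpow v (C.c - C.b)) ++ ([(C.c, C.pc)] ++ Rpow v (v - C.c))))) := by
      simp [SC, List.append_assoc]
    have hmid : ((List.range' C.a 1).map (fun j => (j, f j))).Sublist [(C.a, C.pa)] := by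
      rw [seg_one, h]
    rw [hsplit, hSC]
    simp only [List.map_append]
    exact (seg_sublist v 1 (C.a - 1) f (by omega) (by omega)).append (hmid.append
      ((seg_sublist v (C.a + 1) (C.b - C.a) f (by omega) (by omega)).append
      (((seg_sublist v (C.b + 1) (C.c - C.b) f (by omega) (by omega)).trans
          (List.sublist_append_right _ _)).append
        ((seg_sublist v (C.c + 1) (v - C.c) f (by omega) (by omega)).trans
          (List.sublist_append_right _ _)))))
  · -- second literal satisfied
    have hsplit : List.range' 1 v =
        List.range' 1 (C.a - 1) ++ (List.range' C.a (C.b - C.a) ++ (List.range' C.b 1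
          ++ (List.range' (C.b + 1) (C.c - C.b) ++ List.range' (C.c + 1) (v - C.c)))) := by
      rw [cat (C.b + 1) (C.c - C.b) (C.c + 1) (v - C.c) (by omega),
          cat C.b 1 (C.b + 1) _ (by omega),
          cat C.a (C.b - C.a) C.b _ (by omega),
          cat 1 (C.a - 1) C.a _ (by omega)]
      congr 1
      omega
    have hSC : SC v C = Rpow v (C.a - 1) ++ (([(C.a, C.pa)] ++ Rpow v (C.b - C.a))
        ++ ([(C.b, C.pb)] ++ (Rpow v (C.c - C.b) ++ ([(C.c, C.pc)] ++ Rpow v (v - C.c))))) := by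
      simp [SC, List.append_assoc]
    have hmid : ((List.range' C.b 1).map (fun j => (j, f j))).Sublist [(C.b, C.pb)] := by
      rw [seg_one, h]
    rw [hsplit, hSC]
    simp only [List.map_append]
    exact (seg_sublist v 1 (C.a - 1) f (by omega) (by omega)).append
      ((((seg_sublist v C.a (C.b - C.a) f (by omega) (by omega)).trans
          (List.sublist_append_right _ _))).append (hmid.append
      ((seg_sublist v (C.b + 1) (C.c - C.b) f (by omega) (by omega)).append
        ((seg_sublist v (C.c + 1) (v - C.c) f (by omega) (by omega)).trans
          (List.sublist_append_right _ _)))))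
  · -- third literal satisfied
    have hsplit : List.range' 1 v =
        List.range' 1 (C.a - 1) ++ (List.range' C.a (C.b - C.a) ++ (List.range' C.b (C.c - C.b)
          ++ (List.range' C.c 1 ++ List.range' (C.c + 1) (v - C.c)))) := by
      rw [cat C.c 1 (C.c + 1) (v - C.c) (by omega),
          cat C.b (C.c - C.b) C.c _ (by omega),
          cat C.a (C.b - C.a) C.b _ (by omega),
          cat 1 (C.a - 1) C.a _ (by omega)]
      congr 1
      omega
    have hSC : SC v C = Rpow v (C.a - 1) ++ (([(C.a, C.pa)] ++ Rpow v (C.b - C.a))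
        ++ (([(C.b, C.pb)] ++ Rpow v (C.c - C.b)) ++ ([(C.c, C.pc)] ++ Rpow v (v - C.c)))) := by
      simp [SC, List.append_assoc]
    have hmid : ((List.range' C.c 1).map (fun j => (j, f j))).Sublist [(C.c, C.pc)] := by
      rw [seg_one, h]
    rw [hsplit, hSC]
    simp only [List.map_append]
    exact (seg_sublist v 1 (C.a - 1) f (by omega) (by omega)).append
      ((((seg_sublist v C.a (C.b - C.a) f (by omega) (by omega)).trans
          (List.sublist_append_right _ _))).append
      ((((seg_sublist v C.b (C.c - C.b) f (by omega) (by omega)).trans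
          (List.sublist_append_right _ _))).append (hmid.append
        (seg_sublist v (C.c + 1) (v - C.c) f (by omega) (by omega)))))
end

section
/- Let V = {1,...,n} with n ≥ 2 and let E = {u_1 < u_2 < ... < u_h} ⊆ V be nonempty. Define S_E as the binary string obtained from (01)^{n−1} by inserting, for each u_j ∈ E, an extra '0' immediately before the u_j-th occurrence of '01' (or at the end if u_j = n), and define R(E) = R_1 R_2 ⋯ R_n where R_j = '01' if j ∈ E and R_j = '0' otherwise. Then R(E) is not a subsequence of S_E. -/
/-- The string S_E built from the sorted list u = (u_1 < ... < u_h) of the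
hyperedge E: S_E = T_1 ⋯ T_{n+h−1} with T_j = '0' if j = u_k + k − 1 for some
k, and T_j = '01' otherwise (`false` = 0, `true` = 1). -/
def SE (n : ℕ) (u : List ℕ) : List Bool :=
  List.flatten ((List.range (n + u.length - 1)).map fun j =>
    if ∃ k : Fin u.length, j + 1 = u.get k + (k : ℕ) then [false] else [false, true])

/-- R(E) = R_1 ⋯ R_n with R_j = '01' if j ∈ E and R_j = '0' otherwise. -/
def RE (n : ℕ) (E : Finset ℕ) : List Bool :=
  List.flatten ((List.range n).map fun j =>
    if j + 1 ∈ E then [false, true] else [false])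

def gstr (n : ℕ) : ℕ → List ℕ → List Bool
  | prev, [] => List.replicate (n - prev) false
  | prev, a :: v => List.replicate (a - prev) false ++ true :: gstr n a v

lemma flatten_const_false (E : Finset ℕ) :
    ∀ (len s : ℕ), (∀ j, s ≤ j → j < s + len → j + 1 ∉ E) →
    List.flatten ((List.range' s len).map fun j => if j + 1 ∈ E then [false, true] else [false])
      = List.replicate len false := by
  intro len
  induction len with
  | zero => intro s _; simp
  | succ k ih =>
    intro s hs
    rw [List.range'_succ]
    simp only [List.map_cons, List.flatten_cons]
    rw [if_neg (hs s le_rfl (by omega)), ih (s + 1) (fun j h1 h2 => hs j (by omega) (by omega))]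
    rfl

lemma re_eq (n : ℕ) (E : Finset ℕ) :
    ∀ (l : List ℕ) (prev : ℕ), l.Pairwise (· < ·) →
    (∀ x ∈ l, prev < x ∧ x ≤ n) → (∀ j, prev < j → j ≤ n → (j ∈ E ↔ j ∈ l)) → prev ≤ n →
    List.flatten ((List.range' prev (n - prev)).map fun j =>
      if j + 1 ∈ E then [false, true] else [false]) = gstr n prev l := by
  intro l
  induction l with
  | nil =>
    intro prev _ _ hiff hpn
    rw [flatten_const_false]
    · rfl
    · intro j h1 h2 hmem
      have := (hiff (j+1) (by omega) (by omega)).mp hmem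
      simp at this
  | cons a v ih =>
    intro prev hpw hmem hiff hpn
    have hav : prev < a ∧ a ≤ n := hmem a (List.mem_cons_self)
    have hsplit : List.range' prev (a - 1 - prev) ++ List.range' (a - 1) (n - a + 1)
        = List.range' prev (n - prev) := by
      have := List.range'_append (s := prev) (m := a - 1 - prev) (n := n - a + 1) (step := 1)
      simp only [one_mul] at this
      rw [show prev + (a - 1 - prev) = a - 1 by omega] at this
      rw [show a - 1 - prev + (n - a + 1) = n - prev by omega] at this
      exact this
    rw [← hsplit, List.map_append, List.flatten_append]
    have hva : ∀ x ∈ v, a < x := fun x hx => (List.pairwise_cons.mp hpw).1 x hx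
    rw [flatten_const_false E (a - 1 - prev) prev (by
      intro j h1 h2 hmem'
      have hj : j + 1 ≤ n := by omega
      have := (hiff (j+1) (by omega) hj).mp hmem'
      rcases List.mem_cons.mp this with h | h
      · omega
      · have := hva _ h; omega)]
    rw [show n - a + 1 = (n - a) + 1 from rfl, List.range'_succ]
    simp only [List.map_cons, List.flatten_cons]
    rw [show a - 1 + 1 = a by omega]
    rw [if_pos ((hiff a hav.1 hav.2).mpr (List.mem_cons_self))]
    rw [ih a (List.pairwise_cons.mp hpw).2
      (fun x hx => ⟨hva x hx, (hmem x (List.mem_cons_of_mem a hx)).2⟩)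
      (by
        intro j hj1 hj2
        rw [hiff j (by omega) hj2, List.mem_cons]
        constructor
        · rintro (h | h)
          · omega
          · exact h
        · exact Or.inr) hav.2]
    show List.replicate (a - 1 - prev) false ++ ([false, true] ++ gstr n a v)
        = gstr n prev (a :: v)
    rw [show ([false, true] : List Bool) ++ gstr n a v
        = [false] ++ (true :: gstr n a v) from rfl, ← List.append_assoc]
    rw [show (List.replicate (a - 1 - prev) false ++ [false])
        = List.replicate (a - prev) false by
      rw [← List.replicate_succ']; congr 1; omega]
    rfl

lemma count_false_flatten (P : ℕ → Prop) [DecidablePred P] :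
    ∀ (len s : ℕ),
    (List.flatten ((List.range' s len).map fun j =>
      if P j then [false] else [false, true])).count false = len := by
  intro len
  induction len with
  | zero => intro s; simp
  | succ k ih =>
    intro s
    rw [List.range'_succ]
    simp only [List.map_cons, List.flatten_cons, List.count_append]
    rw [ih (s + 1)]
    by_cases h : P s <;> simp [h] <;> omega

lemma true_pos (P : ℕ → Prop) [DecidablePred P] :
    ∀ (len s : ℕ) (x₁ t : List Bool),
    List.flatten ((List.range' s len).map fun j =>
      if P j then [false] else [false, true]) = x₁ ++ true :: t →
    ∃ j, s ≤ j ∧ j < s + len ∧ ¬ P j ∧ x₁.count false = j + 1 - s := by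
  intro len
  induction len with
  | zero =>
    intro s x₁ t h
    simp only [List.range'_zero, List.map_nil, List.flatten_nil] at h
    exact absurd h (by simp)
  | succ k ih =>
    intro s x₁ t h
    rw [List.range'_succ] at h
    simp only [List.map_cons, List.flatten_cons] at h
    by_cases hP : P s
    · rw [if_pos hP] at h
      cases x₁ with
      | nil => rw [List.nil_append, List.singleton_append] at h; simp at h
      | cons b x₁' =>
        rw [List.singleton_append, List.cons_append] at h
        injection h with hb h2
        obtain ⟨j, hj1, hj2, hj3, hj4⟩ := ih (s + 1) x₁' t h2
        refine ⟨j, by omega, by omega, hj3, ?_⟩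
        subst hb
        simp only [List.count_cons, hj4]
        simp; omega
    · rw [if_neg hP] at h
      simp only [List.cons_append, List.nil_append] at h
      cases x₁ with
      | nil => rw [List.nil_append] at h; simp at h
      | cons b x₁' =>
        rw [List.cons_append] at h
        injection h with hb h2
        subst hb
        cases x₁' with
        | nil =>
          refine ⟨s, le_rfl, by omega, hP, by simp⟩
        | cons b' x₁'' =>
          rw [List.cons_append] at h2
          injection h2 with hb' h3
          subst hb'
          obtain ⟨j, hj1, hj2, hj3, hj4⟩ := ih (s + 1) x₁'' t h3
          refine ⟨j, by omega, by omega, hj3, ?_⟩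
          simp only [List.count_cons, hj4]
          simp; omega

lemma split_sub {d : ℕ} {Y' x : List Bool}
    (hs : (List.replicate d false ++ true :: Y').Sublist x) :
    ∃ s t, x = s ++ true :: t ∧ d ≤ s.count false ∧ Y'.Sublist t := by
  rw [List.append_sublist_iff] at hs
  obtain ⟨r₁, r₂, rfl, hr₁, hr₂⟩ := hs
  rw [List.cons_sublist_iff] at hr₂
  obtain ⟨q₁, q₂, rfl, hmem, hY⟩ := hr₂
  obtain ⟨w₁, w₂, rfl⟩ := List.append_of_mem hmem
  refine ⟨r₁ ++ w₁, w₂ ++ q₂, by simp, ?_, hY.trans (List.sublist_append_right w₂ q₂)⟩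
  have hc := hr₁.count_le false
  simp only [List.count_replicate] at hc
  rw [List.count_append]
  simp at hc
  omega

lemma main_lemma (n : ℕ) (hn : 1 ≤ n) (u : List ℕ) (hu : u.Pairwise (· < ·))
    (hrange : ∀ x ∈ u, 1 ≤ x ∧ x ≤ n) :
    ∀ (l : List ℕ) (m prev : ℕ) (x₁ x₂ : List Bool),
    l = u.drop m → (∀ x ∈ l, prev < x) → prev ≤ n → m + l.length = u.length →
    SE n u = x₁ ++ x₂ → prev + m ≤ x₁.count false →
    ¬ (gstr n prev l).Sublist x₂ := by
  intro l
  induction l with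
  | nil =>
    intro m prev x₁ x₂ hl _ hpn hlen hX hcnt hsub
    have h1 := hsub.count_le false
    simp only [gstr, List.count_replicate] at h1
    simp only [beq_self_eq_true, if_true] at h1
    have h2 : (SE n u).count false = n + u.length - 1 := by
      rw [SE, List.range_eq_range']
      exact count_false_flatten _ _ 0
    rw [hX, List.count_append] at h2
    simp only [List.length_nil] at hlen
    omega
  | cons a v ih =>
    intro m prev x₁ x₂ hl hmem hpn hlen hX hcnt hsub
    have hm : m < u.length := by
      simp only [List.length_cons] at hlen; omega
    have ha : u[m] = a := by
      have h0 : (u.drop m)[0]'(by rw [← hl]; simp) = a := by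
        simp [← hl]
      rw [List.getElem_drop] at h0
      simpa using h0
    have hau : a ∈ u := by rw [← ha]; exact List.getElem_mem _
    have han : a ≤ n := (hrange a hau).2
    have hpa : prev < a := hmem a (List.mem_cons_self)
    rw [show gstr n prev (a :: v)
        = List.replicate (a - prev) false ++ true :: gstr n a v from rfl] at hsub
    obtain ⟨s, t, rfl, hds, hsub'⟩ := split_sub hsub
    have hXeq : SE n u = (x₁ ++ s) ++ true :: t := by
      rw [hX]; simp
    have hB : ∃ j, 0 ≤ j ∧ j < 0 + (n + u.length - 1) ∧
        ¬ (∃ k : Fin u.length, j + 1 = u.get k + (k : ℕ)) ∧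
        (x₁ ++ s).count false = j + 1 - 0 := by
      apply true_pos _ _ 0
      rw [← hXeq, SE, List.range_eq_range']
    obtain ⟨j, -, -, hnsp, hcj⟩ := hB
    have hne : j + 1 ≠ a + m := by
      intro hEq
      exact hnsp ⟨⟨m, hm⟩, by simpa [List.get_eq_getElem, ha] using hEq⟩
    have hge : a + m + 1 ≤ (x₁ ++ s).count false := by
      rw [List.count_append] at hcj ⊢
      omega
    refine ih (m + 1) a (x₁ ++ s ++ [true]) t ?_ ?_ han ?_ ?_ ?_ hsub'
    · rw [← List.tail_drop, ← hl]; rfl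
    · intro x hx
      have hpw : (u.drop m).Pairwise (· < ·) := hu.sublist (List.drop_sublist m u)
      rw [← hl] at hpw
      exact (List.pairwise_cons.mp hpw).1 x hx
    · simp only [List.length_cons] at hlen ⊢
      omega
    · rw [hXeq]; simp
    · rw [List.count_append]
      have h1 : ([true] : List Bool).count false = 0 := by decide
      omega


/-- R(E) is not a subsequence of S_E. -/
theorem stmt_11 (n : ℕ) (hn : 2 ≤ n) (u : List ℕ)
    (hu : List.Chain' (· < ·) u) (hne : u ≠ [])
    (hrange : ∀ x ∈ u, 1 ≤ x ∧ x ≤ n) :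
    ¬ (RE n u.toFinset).Sublist (SE n u) := by
  have hpw : u.Pairwise (· < ·) := List.isChain_iff_pairwise.mp hu
  intro hsub
  have hre : RE n u.toFinset = gstr n 0 u := by
    rw [RE, List.range_eq_range', show n = n - 0 from rfl]
    exact re_eq n u.toFinset u 0 hpw
      (fun x hx => ⟨(hrange x hx).1, (hrange x hx).2⟩)
      (fun j _ _ => List.mem_toFinset) (by omega)
  rw [hre] at hsub
  exact main_lemma n (by omega) u hpw hrange u 0 0 [] (SE n u) rfl
    (fun x hx => (hrange x hx).1) (by omega) (by simp) (by simp) (by simp) hsub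
end

section
/- Let H = (V, 𝓔) be a hypergraph with V = {1,...,n}, n ≥ 2, such that no vertex belongs to every hyperedge. For an independent set U ⊆ V of H, define ψ(U) = X_1 X_2 ⋯ X_n where X_i = '01' if i ∈ U and X_i = '0' otherwise. Then ψ(U) is a common subsequence of the set S(H) = {S_0, S_1, ..., S_{|𝓔|}}, where S_0 = (01)^n and for each hyperedge E_i, S_i is the string obtained from (01)^{n−1} by inserting an extra '0' before the u-th occurrence of '01' for each u ∈ E_i (at the end for u = n). -/
/-- (01)^n over {0,1}, with `false` = 0 and `true` = 1. -/
def pow01 (n : ℕ) : List Bool :=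
  List.flatten (List.replicate n [false, true])

/-- ψ(U) = X_1 ⋯ X_n with X_i = '01' if i ∈ U and X_i = '0' otherwise. -/
def psi (n : ℕ) (U : Finset ℕ) : List Bool :=
  List.flatten ((List.range n).map fun i =>
    if i + 1 ∈ U then [false, true] else [false])

lemma flatten_map_sublist {α : Type*} (l : List α) (f g : α → List Bool)
    (h : ∀ a ∈ l, (f a).Sublist (g a)) :
    (l.map f).flatten.Sublist ((l.map g).flatten) := by
  induction l with
  | nil => simp
  | cons a l ih =>
      simp only [List.map_cons, List.flatten_cons]
      exact (h a (by simp)).append (ih fun a ha => h a (by simp [ha]))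

lemma pow01_succ (n : ℕ) : pow01 (n + 1) = [false, true] ++ pow01 n := rfl

lemma pow01_add (a b : ℕ) : pow01 (a + b) = pow01 a ++ pow01 b := by
  unfold pow01; rw [List.replicate_add, List.flatten_append]

lemma pow01_mono {a b : ℕ} (h : a ≤ b) : (pow01 a).Sublist (pow01 b) := by
  obtain ⟨c, rfl⟩ := Nat.exists_eq_add_of_le h
  rw [pow01_add]
  exact List.sublist_append_left _ _

lemma pow01_eq_flatten {α : Type*} (l : List α) :
    pow01 l.length = (l.map fun _ => [false, true]).flatten := by
  induction l with
  | nil => simp [pow01]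
  | cons a l ih => rw [List.length_cons, pow01_succ, ih]; simp

lemma pow01_countP_sublist (l : List ℕ) (p : ℕ → Bool) :
    (pow01 (l.countP p)).Sublist
      ((l.map fun j => if p j = true then [false, true] else [false]).flatten) := by
  induction l with
  | nil => simp [pow01]
  | cons a l ih =>
      rw [List.countP_cons]
      by_cases hp : p a = true
      · simp only [hp, if_true, List.map_cons, List.flatten_cons]
        rw [pow01_succ]
        exact List.Sublist.append (List.Sublist.refl _) ih
      · simp only [hp, if_false, List.map_cons, List.flatten_cons]
        simpa using (ih.cons false)

lemma flatten_split (m j0 : ℕ) (hj : j0 < m) (g : ℕ → List Bool) :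
    ((List.range m).map g).flatten =
      ((List.range j0).map g).flatten ++ g j0 ++
      (((List.range (m - j0 - 1)).map fun x => j0 + 1 + x).map g).flatten := by
  conv_lhs => rw [show m = (j0 + 1) + (m - j0 - 1) by omega]
  rw [List.range_add, List.range_succ]
  simp [List.flatten_append, List.append_assoc]

lemma count_le_general (l : List ℕ) (hnd : l.Nodup) (p : ℕ → Prop) [DecidablePred p]
    (s : Finset ℕ) (φ : ℕ → ℕ)
    (hmap : ∀ j ∈ l, p j → ∃ t ∈ s, j = φ t) :
    l.countP (fun j => decide (p j)) ≤ s.card := by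
  rw [List.countP_eq_length_filter]
  have hnd2 : (l.filter (fun j => decide (p j))).Nodup := hnd.filter _
  rw [← List.toFinset_card_of_nodup hnd2]
  refine (Finset.card_le_card ?_).trans (Finset.card_image_le (f := φ))
  intro j hj
  rw [List.mem_toFinset, List.mem_filter] at hj
  obtain ⟨hjl, hq⟩ := hj
  obtain ⟨t, ht, rfl⟩ := hmap j hjl (of_decide_eq_true hq)
  exact Finset.mem_image_of_mem φ ht

lemma key (n : ℕ) (U : Finset ℕ) (u : List ℕ)
    (hsorted : u.Pairwise (· < ·))
    (huIcc : ∀ k : Fin u.length, 1 ≤ u.get k ∧ u.get k ≤ n)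
    (k0 : Fin u.length) (hk0U : u.get k0 ∉ U) :
    (psi n U).Sublist (SE n u) := by
  obtain ⟨hh1, hhn⟩ := huIcc k0
  have hk0L : (k0 : ℕ) < u.length := k0.isLt
  have hmono : StrictMono u.get := fun a b hab => List.pairwise_iff_get.mp hsorted a b hab
  have hF : ∀ k k' : Fin u.length,
      k < k' ↔ u.get k + (k : ℕ) < u.get k' + (k' : ℕ) := by
    intro k k'
    constructor
    · intro hlt
      exact Nat.add_lt_add (hmono hlt) hlt
    · intro hlt
      by_contra hle
      push_neg at hle
      have h1 : u.get k' ≤ u.get k := hmono.monotone hle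
      have h2 : (k' : ℕ) ≤ (k : ℕ) := hle
      omega
  set q : ℕ → Prop := fun j => ∃ k : Fin u.length, j + 1 = u.get k + (k : ℕ) with hqdef
  have hSEdef : SE n u = ((List.range (n + u.length - 1)).map
      (fun j => if q j then [false] else [false, true])).flatten := rfl
  have hpsidef : psi n U = ((List.range n).map
      (fun i => if i + 1 ∈ U then [false, true] else [false])).flatten := rfl
  set h := u.get k0 with hhdef
  -- counting bound helpers
  have hgetD : ∀ k : Fin u.length, u.getD (k : ℕ) 0 = u.get k := by
    intro k
    exact List.getD_eq_get (l := u) (d := 0) k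
  have hcount1 : (List.range (h - 1 + (k0 : ℕ))).countP (fun j => decide (q j)) ≤ (k0 : ℕ) := by
    have := count_le_general (List.range (h - 1 + (k0 : ℕ))) List.nodup_range q
      (Finset.range (k0 : ℕ)) (fun t => u.getD t 0 + t - 1) ?_
    · simpa using this
    · intro j hj hqj
      rw [List.mem_range] at hj
      obtain ⟨k, hk⟩ := hqj
      have hklt : k < k0 := by
        rw [hF k k0]
        omega
      refine ⟨(k : ℕ), Finset.mem_range.mpr (Fin.lt_def.mp hklt), ?_⟩
      rw [hgetD k]
      omega
  have hcount2 : ((List.range (n + u.length - 1 - (h - 1 + (k0 : ℕ)) - 1)).map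
      (fun x => (h - 1 + (k0 : ℕ)) + 1 + x)).countP (fun j => decide (q j))
      ≤ u.length - 1 - (k0 : ℕ) := by
    have hnd : ((List.range (n + u.length - 1 - (h - 1 + (k0 : ℕ)) - 1)).map
        (fun x => (h - 1 + (k0 : ℕ)) + 1 + x)).Nodup :=
      List.nodup_range.map (fun a b hab => by omega)
    have := count_le_general _ hnd q
      (Finset.range (u.length - 1 - (k0 : ℕ)))
      (fun t => u.getD ((k0 : ℕ) + 1 + t) 0 + ((k0 : ℕ) + 1 + t) - 1) ?_
    · simpa using this
    · intro j hj hqj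
      rw [List.mem_map] at hj
      obtain ⟨x, hx, rfl⟩ := hj
      rw [List.mem_range] at hx
      obtain ⟨k, hk⟩ := hqj
      have hkgt : k0 < k := by
        rw [hF k0 k]
        omega
      have hkval : (k0 : ℕ) < (k : ℕ) := Fin.lt_def.mp hkgt
      refine ⟨(k : ℕ) - (k0 : ℕ) - 1, Finset.mem_range.mpr (by have := k.isLt; omega), ?_⟩
      have hk' : (k0 : ℕ) + 1 + ((k : ℕ) - (k0 : ℕ) - 1) = (k : ℕ) := by omega
      rw [hk', hgetD k]
      omega
  -- block rewriting: the SE blocks in countP form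
  have hgeq : (fun j => if q j then ([false] : List Bool) else [false, true]) =
      (fun j => if (fun j => !(decide (q j))) j = true then [false, true] else [false]) := by
    funext j
    by_cases hqj : q j <;> simp [hqj]
  -- decompose psi at i0 = h - 1
  have hi0 : h - 1 < n := by omega
  have hj0 : h - 1 + (k0 : ℕ) < n + u.length - 1 := by omega
  rw [hpsidef, hSEdef,
    flatten_split n (h - 1) hi0 _,
    flatten_split (n + u.length - 1) (h - 1 + (k0 : ℕ)) hj0 _]
  have hfmid : (if h - 1 + 1 ∈ U then [false, true] else [false]) = ([false] : List Bool) := by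
    have : h - 1 + 1 = h := by omega
    simp only [this]
    exact if_neg hk0U
  have hgmid : (if q (h - 1 + (k0 : ℕ)) then ([false] : List Bool) else [false, true]) = [false] := by
    have hq0 : q (h - 1 + (k0 : ℕ)) := ⟨k0, by omega⟩
    exact if_pos hq0
  rw [hfmid, hgmid]
  refine List.Sublist.append (List.Sublist.append ?_ (List.Sublist.refl _)) ?_
  · -- A ≤ P
    have hAP1 : (((List.range (h - 1)).map
        (fun i => if i + 1 ∈ U then [false, true] else [false])).flatten).Sublist (pow01 (h - 1)) := by
      have hp : pow01 (h - 1) = ((List.range (h - 1)).map fun _ => [false, true]).flatten := by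
        simpa using pow01_eq_flatten (List.range (h - 1))
      rw [hp]
      exact flatten_map_sublist _ _ _ (fun i _ => by split <;> simp)
    have hAP2 : (pow01 (h - 1)).Sublist
        (((List.range (h - 1 + (k0 : ℕ))).map
          (fun j => if q j then [false] else [false, true])).flatten) := by
      rw [hgeq]
      refine (pow01_mono ?_).trans (pow01_countP_sublist (List.range (h - 1 + (k0 : ℕ))) _)
      have htot := List.length_eq_countP_add_countP (fun j => !(decide (q j))) (l := List.range (h - 1 + (k0 : ℕ)))
      have hlen : (List.range (h - 1 + (k0 : ℕ))).length = h - 1 + (k0 : ℕ) := List.length_range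
      have hc2 : (List.range (h - 1 + (k0 : ℕ))).countP (fun a => decide (¬ (!(decide (q a))) = true)) = (List.range (h - 1 + (k0 : ℕ))).countP (fun j => decide (q j)) := by
        congr 1
        funext a
        by_cases hqa : q a <;> simp [hqa]
      omega
    exact hAP1.trans hAP2
  · -- B ≤ Q
    have hBQ1 : ((((List.range (n - (h - 1) - 1)).map fun x => h - 1 + 1 + x).map
        (fun i => if i + 1 ∈ U then [false, true] else [false])).flatten).Sublist (pow01 (n - h)) := by
      have hp : pow01 (n - h) = (((List.range (n - (h - 1) - 1)).map fun x => h - 1 + 1 + x).map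
          fun _ => [false, true]).flatten := by
        have := pow01_eq_flatten ((List.range (n - (h - 1) - 1)).map fun x => h - 1 + 1 + x)
        simpa [show n - (h - 1) - 1 = n - h by omega] using this
      rw [hp]
      exact flatten_map_sublist _ _ _ (fun i _ => by split <;> simp)
    have hBQ2 : (pow01 (n - h)).Sublist
        ((((List.range (n + u.length - 1 - (h - 1 + (k0 : ℕ)) - 1)).map
            fun x => h - 1 + (k0 : ℕ) + 1 + x).map
          (fun j => if q j then [false] else [false, true])).flatten) := by
      rw [hgeq]
      refine (pow01_mono ?_).trans (pow01_countP_sublist _ _)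
      have htot := List.length_eq_countP_add_countP (fun j => !(decide (q j)))
        (l := (List.range (n + u.length - 1 - (h - 1 + (k0 : ℕ)) - 1)).map
          fun x => h - 1 + (k0 : ℕ) + 1 + x)
      have hlen : ((List.range (n + u.length - 1 - (h - 1 + (k0 : ℕ)) - 1)).map
          (fun x => h - 1 + (k0 : ℕ) + 1 + x)).length = n + u.length - 1 - (h - 1 + (k0 : ℕ)) - 1 := by
        simp
      have hc2 : ((List.range (n + u.length - 1 - (h - 1 + (k0 : ℕ)) - 1)).map
          (fun x => h - 1 + (k0 : ℕ) + 1 + x)).countP (fun a => decide (¬ (!(decide (q a))) = true)) = ((List.range (n + u.length - 1 - (h - 1 + (k0 : ℕ)) - 1)).map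
          (fun x => h - 1 + (k0 : ℕ) + 1 + x)).countP (fun j => decide (q j)) := by
        congr 1
        funext a
        by_cases hqa : q a <;> simp [hqa]
      have hc3 := hcount2
      omega
    exact hBQ1.trans hBQ2

/-- for an independent set U of the hypergraph H = ({1,...,n}, 𝓔)
(no vertex belonging to every hyperedge), ψ(U) is a common subsequence of
S(H) = {S_0 = (01)^n} ∪ {S_E : E ∈ 𝓔}. -/
theorem stmt_12 (n : ℕ) (hn : 2 ≤ n) (𝓔 : Finset (Finset ℕ))
    (hE : ∀ E ∈ 𝓔, E ⊆ Finset.Icc 1 n ∧ E.Nonempty)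
    (hcover : ∀ v ∈ Finset.Icc 1 n, ∃ E ∈ 𝓔, v ∉ E)
    (U : Finset ℕ) (hU : U ⊆ Finset.Icc 1 n)
    (hind : ∀ E ∈ 𝓔, ¬ E ⊆ U) :
    (psi n U).Sublist (pow01 n) ∧
    ∀ E ∈ 𝓔, (psi n U).Sublist (SE n (E.sort (· ≤ ·))) := by
  constructor
  · have hpow : pow01 n = ((List.range n).map fun _ => [false, true]).flatten := by
      simpa using pow01_eq_flatten (List.range n)
    rw [hpow]
    exact flatten_map_sublist _ _ _ (fun i _ => by split <;> simp)
  · intro E hEmem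
    obtain ⟨hEsub, hEne⟩ := hE E hEmem
    obtain ⟨h, hhE, hhU⟩ := Finset.not_subset.mp (hind E hEmem)
    have hmem : h ∈ E.sort (· ≤ ·) := (Finset.mem_sort _).mpr hhE
    obtain ⟨k0, hk0⟩ := List.mem_iff_get.mp hmem
    apply key n U _ (List.pairwise_iff_get.mpr (fun a b hab => (Finset.sortedLT_sort E).strictMono_get hab)) _ k0 (hk0 ▸ hhU)
    intro k
    have hk : (E.sort (· ≤ ·)).get k ∈ E := (Finset.mem_sort _).mp (List.get_mem _ k)
    exact Finset.mem_Icc.mp (hEsub hk)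
end

section
/- Let H = (V, 𝓔) be a hypergraph with V = {1,...,n}, n ≥ 2, having no independent set of cardinality n−1 (equivalently, no vertex lies in every hyperedge). Then the map ψ, sending a subset U ⊆ V to the binary string X_1⋯X_n with X_i = '01' if i ∈ U and X_i = '0' otherwise, is a bijection between the collection of maximal independent sets of H and the set of maximal common subsequences of S(H) different from (01)^{n−1}. -/
/-- The set of strings S(H) = {S_0} ∪ {S_E : E ∈ 𝓔}. -/
def SH (n : ℕ) (𝓔 : Finset (Finset ℕ)) : Set (List Bool) :=
  insert (pow01 n) {S : List Bool | ∃ E ∈ 𝓔, S = SE n (E.sort (· ≤ ·))}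

/-- X is a common subsequence of the set 𝓢 of binary strings. -/
def IsCS (𝓢 : Set (List Bool)) (X : List Bool) : Prop :=
  ∀ S ∈ 𝓢, X.Sublist S

/-- X is a maximal common subsequence of 𝓢. -/
def IsMCS (𝓢 : Set (List Bool)) (X : List Bool) : Prop :=
  IsCS 𝓢 X ∧ ∀ Y : List Bool, IsCS 𝓢 Y → X.Sublist Y → Y = X

namespace Stmt13
open List

def blk (b : Bool) : List Bool := if b then [false, true] else [false]

def blocks (l : List Bool) : List Bool := (l.map blk).flatten

@[simp] lemma blocks_nil : blocks [] = [] := rfl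

@[simp] lemma blocks_cons (b : Bool) (l : List Bool) :
    blocks (b :: l) = blk b ++ blocks l := rfl

lemma blocks_append (a b : List Bool) : blocks (a ++ b) = blocks a ++ blocks b := by
  simp [blocks]

@[simp] lemma blocks_false_cons (l : List Bool) :
    blocks (false :: l) = false :: blocks l := rfl

@[simp] lemma blocks_true_cons (l : List Bool) :
    blocks (true :: l) = false :: true :: blocks l := rfl

lemma blocks_eq_nil_iff {l : List Bool} : blocks l = [] ↔ l = [] := by
  cases l with
  | nil => simp
  | cons b t => cases b <;> simp [blk]

lemma blocks_head (l : List Bool) : blocks l = [] ∨ ∃ t, blocks l = false :: t := by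
  cases l with
  | nil => exact Or.inl rfl
  | cons b t => cases b <;> exact Or.inr ⟨_, rfl⟩

def emb : List Bool → List Bool → Bool
  | [], _ => true
  | _ :: _, [] => false
  | false :: β, _ :: γ => emb β γ
  | true :: β, false :: γ => emb (true :: β) γ
  | true :: β, true :: γ => emb β γ

@[simp] lemma emb_nil_left (γ : List Bool) : emb [] γ = true := by cases γ <;> rfl
@[simp] lemma emb_cons_nil (b : Bool) (β : List Bool) : emb (b :: β) [] = false := by
  cases b <;> rfl
@[simp] lemma emb_false_cons (β γ : List Bool) (c : Bool) :
    emb (false :: β) (c :: γ) = emb β γ := rfl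
@[simp] lemma emb_true_false (β γ : List Bool) :
    emb (true :: β) (false :: γ) = emb (true :: β) γ := rfl
@[simp] lemma emb_true_true (β γ : List Bool) :
    emb (true :: β) (true :: γ) = emb β γ := rfl

lemma emb_AB (γ : List Bool) :
    (∀ β b, emb (b :: β) γ = true → emb β γ = true) ∧
    (∀ β c, emb β γ = true → emb β (c :: γ) = true) := by
  induction γ with
  | nil =>
    constructor
    · intro β b h; simp at h
    · intro β c h
      cases β with
      | nil => simp
      | cons x t => simp at h
  | cons d γ' ih =>
    constructor
    · intro β b h
      cases b with
      | false =>
        rw [emb_false_cons] at h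
        exact ih.2 β d h
      | true =>
        cases d with
        | false =>
          rw [emb_true_false] at h
          exact ih.2 β false (ih.1 β true h)
        | true =>
          rw [emb_true_true] at h
          exact ih.2 β true h
    · intro β c h
      cases β with
      | nil => simp
      | cons b β' =>
        cases b with
        | false =>
          rw [emb_false_cons] at h
          rw [emb_false_cons]
          exact ih.2 β' d h
        | true =>
          cases d with
          | false =>
            rw [emb_true_false] at h
            cases c with
            | false => rw [emb_true_false, emb_true_false]; exact h
            | true =>
              rw [emb_true_true]
              exact ih.2 β' false (ih.1 β' true h)
          | true =>
            rw [emb_true_true] at h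
            cases c with
            | false => rw [emb_true_false, emb_true_true]; exact h
            | true => rw [emb_true_true]; exact ih.2 β' true h

lemma emb_drop {β γ : List Bool} {b : Bool} (h : emb (b :: β) γ = true) :
    emb β γ = true := (emb_AB γ).1 β b h

lemma emb_consR {β γ : List Bool} (c : Bool) (h : emb β γ = true) :
    emb β (c :: γ) = true := (emb_AB γ).2 β c h

lemma emb_length : ∀ (γ β : List Bool), emb β γ = true → β.length ≤ γ.length := by
  intro γ
  induction γ with
  | nil => intro β h; cases β with
    | nil => simp
    | cons b t => simp at h
  | cons c γ' ih =>
    intro β h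
    cases β with
    | nil => simp
    | cons b β' =>
      cases b with
      | false =>
        rw [emb_false_cons] at h
        have := ih β' h
        simp at this ⊢; omega
      | true =>
        cases c with
        | false =>
          rw [emb_true_false] at h
          have := ih _ h
          simp at this ⊢; omega
        | true =>
          rw [emb_true_true] at h
          have := ih β' h
          simp at this ⊢; omega

lemma emb_refl : ∀ (β : List Bool), emb β β = true := by
  intro β
  induction β with
  | nil => simp
  | cons b t ih => cases b <;> simpa

lemma emb_strip : ∀ (l : List Bool) (β γ : List Bool),
    emb (List.replicate l.length false ++ β) (l ++ γ) = emb β γ := by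
  intro l
  induction l with
  | nil => intro β γ; simp
  | cons c l' ih =>
    intro β γ
    simp only [List.length_cons, List.replicate_succ, List.cons_append, emb_false_cons]
    exact ih β γ

lemma emb_stripT : ∀ (a : ℕ) (β γ : List Bool),
    emb (List.replicate a true ++ β) (List.replicate a true ++ γ) = emb β γ := by
  intro a
  induction a with
  | zero => intro β γ; simp
  | succ k ih =>
    intro β γ
    simp only [List.replicate_succ, List.cons_append, emb_true_true]
    exact ih β γ

lemma emb_T_count : ∀ (γ : List Bool) (a : ℕ), a ≤ γ.count true →
    emb (List.replicate a true) γ = true := by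
  intro γ
  induction γ with
  | nil => intro a h; simp at h; simp [h]
  | cons c γ' ih =>
    intro a h
    cases a with
    | zero => simp
    | succ k =>
      cases c with
      | false =>
        rw [List.replicate_succ, emb_true_false, ← List.replicate_succ]
        apply ih
        simpa [List.count_cons] using h
      | true =>
        rw [List.replicate_succ, emb_true_true]
        apply ih
        simp [List.count_cons] at h
        omega

def ble (a b : Bool) : Prop := a = true → b = true

lemma ble_refl (a : Bool) : ble a a := fun h => h

lemma ble_true (a : Bool) : ble a true := fun _ => rfl

lemma emb_anti : ∀ (γ β β' : List Bool), List.Forall₂ ble β β' →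
    emb β' γ = true → emb β γ = true := by
  intro γ
  induction γ with
  | nil =>
    intro β β' hf h
    cases hf with
    | nil => simp
    | cons hb ht => simp at h
  | cons c γ' ih =>
    intro β β' hf h
    cases hf with
    | nil => simp
    | @cons b b' t t' hb ht =>
      cases b' with
      | false =>
        have hbf : b = false := by
          cases b
          · rfl
          · exact absurd (hb rfl) (by simp)
        subst hbf
        rw [emb_false_cons] at h ⊢
        exact ih t t' ht h
      | true =>
        cases c with
        | false =>
          rw [emb_true_false] at h
          have h2 : emb (b :: t) γ' = true := ih (b :: t) (true :: t') (.cons hb ht) h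
          cases b with
          | false =>
            rw [emb_false_cons]
            exact emb_drop h2
          | true => rw [emb_true_false]; exact h2
        | true =>
          rw [emb_true_true] at h
          cases b with
          | false =>
            rw [emb_false_cons]
            exact ih t t' ht h
          | true =>
            rw [emb_true_true]
            exact ih t t' ht h


lemma emb_of_sublist_main : ∀ (γ : List Bool),
    (∀ β, blocks β <+ blocks γ → emb β γ = true) ∧
    (∀ β, (true :: blocks β) <+ blocks γ → emb (true :: β) γ = true) := by
  intro γ
  induction γ with
  | nil =>
    constructor
    · intro β h
      simp only [blocks_nil, List.sublist_nil] at h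
      rw [blocks_eq_nil_iff] at h
      simp [h]
    · intro β h; simp at h
  | cons c γ' ih =>
    constructor
    · intro β h
      cases β with
      | nil => simp
      | cons b β' =>
        cases c with
        | false =>
          rw [blocks_false_cons] at h
          rcases List.sublist_cons_iff.1 h with h1 | ⟨r, hr, h2⟩
          · have := ih.1 _ h1
            cases b
            · rw [emb_false_cons]; exact emb_drop this
            · rw [emb_true_false]; exact this
          · cases b with
            | false =>
              rw [blocks_false_cons] at hr
              injection hr with _ hr2
              rw [emb_false_cons]
              exact ih.1 _ (hr2 ▸ h2)
            | true =>
              rw [blocks_true_cons] at hr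
              injection hr with _ hr2
              rw [emb_true_false]
              exact ih.2 β' (hr2 ▸ h2)
        | true =>
          rw [blocks_true_cons] at h
          rcases List.sublist_cons_iff.1 h with h1 | ⟨r, hr, h2⟩
          · rcases List.sublist_cons_iff.1 h1 with h3 | ⟨r', hr', h3⟩
            · have := ih.1 _ h3
              cases b
              · rw [emb_false_cons]; exact emb_drop this
              · rw [emb_true_true]; exact emb_drop this
            · exfalso
              cases b
              · rw [blocks_false_cons] at hr'; simp at hr'
              · rw [blocks_true_cons] at hr'; simp at hr'
          · cases b with
            | false =>
              rw [blocks_false_cons] at hr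
              injection hr with _ hr2
              subst hr2
              rcases List.sublist_cons_iff.1 h2 with h3 | ⟨r', hr', h3⟩
              · rw [emb_false_cons]; exact ih.1 _ h3
              · exfalso
                rcases blocks_head β' with he | ⟨t, ht⟩
                · rw [he] at hr'; simp at hr'
                · rw [ht] at hr'; simp at hr'
            | true =>
              rw [blocks_true_cons] at hr
              injection hr with _ hr2
              subst hr2
              rcases List.sublist_cons_iff.1 h2 with h3 | ⟨r', hr', h3⟩
              · rw [emb_true_true]
                exact emb_drop (ih.2 β' h3)
              · injection hr' with _ hr2'
                rw [emb_true_true]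
                exact ih.1 _ (hr2' ▸ h3)
    · intro β h
      cases c with
      | false =>
        rw [blocks_false_cons] at h
        rcases List.sublist_cons_iff.1 h with h1 | ⟨r, hr, h2⟩
        · rw [emb_true_false]; exact ih.2 _ h1
        · simp at hr
      | true =>
        rw [blocks_true_cons] at h
        rcases List.sublist_cons_iff.1 h with h1 | ⟨r, hr, h2⟩
        · rcases List.sublist_cons_iff.1 h1 with h3 | ⟨r', hr', h3⟩
          · rw [emb_true_true]
            exact emb_drop (ih.2 _ h3)
          · injection hr' with _ hr2'
            rw [emb_true_true]
            exact ih.1 β (hr2' ▸ h3)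
        · simp at hr

lemma sublist_of_emb : ∀ (γ β : List Bool), emb β γ = true → blocks β <+ blocks γ := by
  intro γ
  induction γ with
  | nil =>
    intro β h
    cases β with
    | nil => simp
    | cons b t => simp at h
  | cons c γ' ih =>
    intro β h
    cases β with
    | nil => simp
    | cons b β' =>
      cases b with
      | false =>
        rw [emb_false_cons] at h
        have := ih _ h
        cases c
        · rw [blocks_false_cons, blocks_false_cons]
          exact this.cons₂ _
        · rw [blocks_false_cons, blocks_true_cons]
          exact (this.cons _).cons₂ _
      | true =>
        cases c with
        | false =>
          rw [emb_true_false] at h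
          exact (ih _ h).trans (by rw [blocks_false_cons]; exact (List.sublist_cons_self _ _))
        | true =>
          rw [emb_true_true] at h
          have := ih _ h
          rw [blocks_true_cons, blocks_true_cons]
          exact (this.cons₂ _).cons₂ _

lemma blocks_sublist_iff {β γ : List Bool} : blocks β <+ blocks γ ↔ emb β γ = true :=
  ⟨fun h => (emb_of_sublist_main γ).1 β h, fun h => sublist_of_emb γ β h⟩

lemma count_false_blocks : ∀ (γ : List Bool), (blocks γ).count false = γ.length := by
  intro γ
  induction γ with
  | nil => simp
  | cons c γ' ih => cases c <;> simp [blk, List.count_cons, ih]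

lemma count_true_blocks : ∀ (γ : List Bool), (blocks γ).count true = γ.count true := by
  intro γ
  induction γ with
  | nil => simp
  | cons c γ' ih => cases c <;> simp [blk, List.count_cons, ih]

lemma blocks_injective : ∀ (β γ : List Bool), blocks β = blocks γ → β = γ := by
  intro β
  induction β with
  | nil =>
    intro γ h
    simp only [blocks_nil] at h
    exact (blocks_eq_nil_iff.1 h.symm).symm
  | cons b β' ih =>
    intro γ h
    cases γ with
    | nil =>
      exfalso
      cases b <;> simp [blk] at h
    | cons c γ' =>
      cases b <;> cases c
      · rw [blocks_false_cons, blocks_false_cons] at h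
        injection h with _ h2
        rw [ih _ h2]
      · rw [blocks_false_cons, blocks_true_cons] at h
        injection h with _ h2
        exfalso
        rcases blocks_head β' with he | ⟨t, ht⟩
        · rw [he] at h2; simp at h2
        · rw [ht] at h2; simp at h2
      · rw [blocks_true_cons, blocks_false_cons] at h
        injection h with _ h2
        exfalso
        rcases blocks_head γ' with he | ⟨t, ht⟩
        · rw [he] at h2; simp at h2
        · rw [ht] at h2; simp at h2
      · rw [blocks_true_cons, blocks_true_cons] at h
        injection h with _ h2
        injection h2 with _ h3
        rw [ih _ h3]

def NoTT (l : List Bool) : Prop := List.Chain' (fun a b => a = false ∨ b = false) l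

lemma noTT_blocks : ∀ (γ : List Bool), NoTT (blocks γ) := by
  intro γ
  induction γ with
  | nil => exact List.isChain_nil
  | cons c γ' ih =>
    cases c with
    | false =>
      rw [blocks_false_cons]
      exact List.isChain_cons.2 ⟨fun y _ => Or.inl rfl, ih⟩
    | true =>
      rw [blocks_true_cons]
      refine List.isChain_cons.2 ⟨fun y _ => Or.inl rfl, ?_⟩
      refine List.isChain_cons.2 ⟨?_, ih⟩
      intro y hy
      rcases blocks_head γ' with he | ⟨t, ht⟩
      · rw [he] at hy; simp at hy
      · rw [ht] at hy; simp at hy; simp [hy]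

lemma insert_false_TT : ∀ (S A B : List Bool), NoTT S →
    (A ++ true :: true :: B) <+ S → (A ++ true :: false :: true :: B) <+ S := by
  intro S
  induction S with
  | nil =>
    intro A B _ h
    exfalso
    have := List.sublist_nil.1 h
    simp at this
  | cons s S' ih =>
    intro A B hno h
    have hno' : NoTT S' := hno.tail
    cases A with
    | nil =>
      simp only [List.nil_append] at h ⊢
      rcases List.sublist_cons_iff.1 h with h1 | ⟨r, hr, h2⟩
      · exact (ih [] B hno' h1).cons _
      · injection hr with hs hr2
        subst hs
        subst hr2
        -- true :: B <+ S' , S' head must be false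
        cases S' with
        | nil => simp at h2
        | cons d S'' =>
          have hd : d = false := by
            rcases List.isChain_cons_cons.1 hno with ⟨hrel, _⟩
            rcases hrel with h' | h'
            · simp at h'
            · exact h'
          subst hd
          have h3 : (true :: B) <+ S'' := by
            rcases List.sublist_cons_iff.1 h2 with h3 | ⟨r', hr', h3⟩
            · exact h3
            · simp at hr'
          exact (((h3.cons₂ false)).cons₂ true)
    | cons a A' =>
      simp only [List.cons_append] at h ⊢
      rcases List.sublist_cons_iff.1 h with h1 | ⟨r, hr, h2⟩
      · exact (ih (a :: A') B hno' h1).cons _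
      · injection hr with hs hr2
        subst hs
        subst hr2
        exact (ih A' B hno' h2).cons₂ _

lemma cons_false_sub {S' X : List Bool}
    (h : X <+ (false :: S')) (hX : X = [] ∨ ∃ X', X = true :: X') :
    (false :: X) <+ (false :: S') := by
  rcases hX with rfl | ⟨X', rfl⟩
  · simpa using List.nil_sublist S'
  · have : (true :: X') <+ S' := by
      rcases List.sublist_cons_iff.1 h with h1 | ⟨r, hr, h2⟩
      · exact h1
      · simp at hr
    exact this.cons₂ false

lemma sub_pow_of_noTT : ∀ (m : ℕ) (X : List Bool), X.length ≤ m → NoTT X →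
    (X = [] ∨ X.head? = some false) →
    X <+ blocks (List.replicate (X.count false) true) := by
  intro m
  induction m with
  | zero =>
    intro X hl _ _
    have : X = [] := by
      cases X
      · rfl
      · simp at hl
    simp [this]
  | succ k ih =>
    intro X hl hno hhead
    cases X with
    | nil => simp
    | cons x X' =>
      have hx : x = false := by
        rcases hhead with h | h
        · simp at h
        · simpa using h
      subst hx
      cases X' with
      | nil => simp [blk]
      | cons y X'' =>
        cases y with
        | true =>
          -- X = false :: true :: X''
          have hcount : (false :: true :: X'').count false = X''.count false + 1 := by
            simp [List.count_cons]
          rw [hcount, List.replicate_succ, blocks_true_cons]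
          have hhead'' : X'' = [] ∨ X''.head? = some false := by
            rcases List.isChain_cons.1 (hno.tail) with ⟨hrel, _⟩
            cases X'' with
            | nil => exact Or.inl rfl
            | cons z t =>
              rcases hrel z rfl with h | h
              · simp at h
              · simp [h]
          have := ih X'' (by simp at hl ⊢; omega) (hno.tail.tail) hhead''
          exact (this.cons₂ true).cons₂ false
        | false =>
          -- X = false :: false :: X''
          have hcount : (false :: false :: X'').count false
              = (false :: X'').count false + 1 := by simp [List.count_cons]
          rw [hcount, List.replicate_succ, blocks_true_cons]
          have := ih (false :: X'') (by simp at hl ⊢; omega) hno.tail (Or.inr rfl)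
          exact ((this.cons true).cons₂ false)

def bv (n : ℕ) (U : Finset ℕ) : List Bool :=
  (List.range n).map fun i => decide (i + 1 ∈ U)

def bl (n : ℕ) (u : List ℕ) : List Bool :=
  (List.range n).map fun i => decide ((i + 1) ∈ u)

def gm (n : ℕ) (u : List ℕ) : List Bool :=
  (List.range (n + u.length - 1)).map fun j =>
    !decide (∃ k : Fin u.length, j + 1 = u.get k + (k : ℕ))

def cvec (n e : ℕ) : List Bool :=
  List.replicate (e - 1) true ++ false :: List.replicate (n - e) true

@[simp] lemma length_bv (n : ℕ) (U : Finset ℕ) : (bv n U).length = n := by simp [bv]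
@[simp] lemma length_bl (n : ℕ) (u : List ℕ) : (bl n u).length = n := by simp [bl]
@[simp] lemma length_gm (n : ℕ) (u : List ℕ) : (gm n u).length = n + u.length - 1 := by
  simp [gm]

lemma psi_eq (n : ℕ) (U : Finset ℕ) : psi n U = blocks (bv n U) := by
  unfold psi blocks bv
  rw [List.map_map]
  congr 1
  apply List.map_congr_left
  intro i _
  by_cases h : i + 1 ∈ U
  · rw [if_pos h]
    show _ = blk (decide (i + 1 ∈ U))
    rw [decide_eq_true h]
    rfl
  · rw [if_neg h]
    show _ = blk (decide (i + 1 ∈ U))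
    rw [decide_eq_false h]
    rfl

lemma SE_eq (n : ℕ) (u : List ℕ) : SE n u = blocks (gm n u) := by
  unfold SE blocks gm
  rw [List.map_map]
  congr 1
  apply List.map_congr_left
  intro j _
  by_cases h : ∃ k : Fin u.length, j + 1 = u.get k + (k : ℕ)
  · rw [if_pos h]
    show _ = blk (!decide _)
    rw [decide_eq_true h]
    rfl
  · rw [if_neg h]
    show _ = blk (!decide _)
    rw [decide_eq_false h]
    rfl

lemma pow01_eq (n : ℕ) : pow01 n = blocks (List.replicate n true) := by
  simp [pow01, blocks, List.map_replicate, blk]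

lemma range_map_split {α : Type*} (f : ℕ → α) (a b : ℕ) :
    (List.range (a + b)).map f
      = (List.range a).map f ++ (List.range b).map (fun i => f (a + i)) := by
  rw [List.range_add, List.map_append, List.map_map]
  rfl

lemma range_succ_map {α : Type*} (f : ℕ → α) (a : ℕ) :
    (List.range (a + 1)).map f = (List.range a).map f ++ [f a] := by
  rw [List.range_succ, List.map_append]
  rfl

lemma map_range_eq_replicate {α : Type*} (f : ℕ → α) (a : ℕ) (c : α)
    (h : ∀ i, i < a → f i = c) : (List.range a).map f = List.replicate a c := by
  rw [List.eq_replicate_iff]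
  refine ⟨by simp, ?_⟩
  intro b hb
  rcases List.mem_map.1 hb with ⟨i, hi, rfl⟩
  exact h i (List.mem_range.1 hi)

lemma bl_nil (n : ℕ) : bl n [] = List.replicate n false := by
  apply map_range_eq_replicate
  intro i _
  simp

lemma gm_nil (n : ℕ) : gm n [] = List.replicate (n - 1) true := by
  unfold gm
  have h : n + ([] : List ℕ).length - 1 = n - 1 := by simp
  rw [h]
  apply map_range_eq_replicate
  intro i _
  simp

lemma gm_cond (e : ℕ) (u' : List ℕ) (j : ℕ) :
    (∃ k : Fin (e :: u').length, j + 1 = (e :: u').get k + (k : ℕ)) ↔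
      (j + 1 = e ∨ ∃ k : Fin u'.length, j + 1 = u'.get k + (k : ℕ) + 1) := by
  constructor
  · rintro ⟨⟨i, hi⟩, hk⟩
    cases i with
    | zero =>
      left
      simpa using hk
    | succ i' =>
      right
      refine ⟨⟨i', by simpa using hi⟩, ?_⟩
      simp only [List.get_eq_getElem, List.getElem_cons_succ] at hk
      simp only [List.get_eq_getElem]
      omega
  · rintro (h | ⟨⟨i, hi⟩, hk⟩)
    · exact ⟨⟨0, by simp⟩, by simpa using h⟩
    · refine ⟨⟨i + 1, by simpa using Nat.succ_lt_succ hi⟩, ?_⟩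
      simp only [List.get_eq_getElem, List.getElem_cons_succ]
      simp only [List.get_eq_getElem] at hk
      omega

lemma bl_cons (n e : ℕ) (u' : List ℕ) (he1 : 1 ≤ e) (hen : e ≤ n)
    (hu' : ∀ x ∈ u', e < x) :
    bl n (e :: u') = List.replicate (e - 1) false ++ true :: bl (n - e) (u'.map (· - e)) := by
  unfold bl
  have h1 : n = e + (n - e) := by omega
  have h2 : e = (e - 1) + 1 := by omega
  set f : ℕ → Bool := fun i => decide ((i + 1) ∈ e :: u') with hf
  have step1 : (List.range n).map f
      = (List.range e).map f ++ (List.range (n - e)).map (fun i => f (e + i)) := by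
    conv_lhs => rw [h1]
    rw [range_map_split]
  rw [step1]
  have hpartA : (List.range e).map f = List.replicate (e - 1) false ++ [true] := by
    conv_lhs => rw [h2]
    rw [range_succ_map]
    congr 1
    · apply map_range_eq_replicate
      intro i hi
      have hne' : ¬ (i + 1 ∈ e :: u') := by
        simp only [List.mem_cons]
        push_neg
        refine ⟨by omega, fun hmem => absurd (hu' _ hmem) (by omega)⟩
      simp only [hf]
      exact decide_eq_false hne'
    · have hmem : (e - 1) + 1 ∈ e :: u' := List.mem_cons.2 (Or.inl (by omega))
      simp only [hf]
      simp only [decide_eq_true hmem]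
  have hpartB : (List.range (n - e)).map (fun i => f (e + i))
      = (List.range (n - e)).map (fun i => decide ((i + 1) ∈ u'.map (· - e))) := by
    apply List.map_congr_left
    intro i _
    simp only [hf]
    apply decide_eq_decide.2
    constructor
    · intro hmem
      rcases List.mem_cons.1 hmem with h | h
      · omega
      · exact List.mem_map.2 ⟨e + i + 1, h, by omega⟩
    · intro hmem
      rcases List.mem_map.1 hmem with ⟨x, hx, hxe⟩
      have hgt := hu' x hx
      have hxeq : x = e + i + 1 := by omega
      exact List.mem_cons.2 (Or.inr (hxeq ▸ hx))
  rw [hpartA, hpartB, List.append_assoc]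
  rfl

lemma gm_single (n e : ℕ) (he1 : 1 ≤ e) (hen : e ≤ n) :
    gm n [e] = cvec n e := by
  unfold gm cvec
  have hl : n + [e].length - 1 = n := by simp
  rw [hl]
  have hfun : ∀ j ∈ List.range n,
      (!decide (∃ k : Fin [e].length, j + 1 = [e].get k + (k : ℕ)))
      = !decide (j + 1 = e) := by
    intro j _
    congr 1
    apply decide_eq_decide.2
    rw [gm_cond]
    simp
  rw [List.map_congr_left hfun]
  have h1 : n = e + (n - e) := by omega
  have h2 : e = (e - 1) + 1 := by omega
  set f : ℕ → Bool := fun j => !decide (j + 1 = e) with hf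
  have step1 : (List.range n).map f
      = (List.range e).map f ++ (List.range (n - e)).map (fun i => f (e + i)) := by
    conv_lhs => rw [h1]
    rw [range_map_split]
  rw [step1]
  have hpartA : (List.range e).map f = List.replicate (e - 1) true ++ [false] := by
    conv_lhs => rw [h2]
    rw [range_succ_map]
    congr 1
    · apply map_range_eq_replicate
      intro i hi
      simp only [hf]
      have : ¬ (i + 1 = e) := by omega
      rw [decide_eq_false this]
      rfl
    · have : (e - 1) + 1 = e := by omega
      simp [hf, this]
  have hpartB : (List.range (n - e)).map (fun i => f (e + i))
      = List.replicate (n - e) true := by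
    apply map_range_eq_replicate
    intro i hi
    simp only [hf]
    have : ¬ (e + i + 1 = e) := by omega
    rw [decide_eq_false this]
    rfl
  rw [hpartA, hpartB, List.append_assoc]
  rfl

lemma gm_cons (n e : ℕ) (u' : List ℕ) (he1 : 1 ≤ e)
    (hu' : ∀ x ∈ u', e < x ∧ x ≤ n) (hne : u' ≠ []) :
    gm n (e :: u') = List.replicate (e - 1) true
      ++ false :: true :: gm (n - e) (u'.map (· - e)) := by
  have hlt : e < n := by
    rcases u' with _ | ⟨x, t⟩
    · exact absurd rfl hne
    · have := hu' x (by simp)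
      omega
  have hu'len : 1 ≤ u'.length := by
    rcases u' with _ | _
    · exact absurd rfl hne
    · simp
  unfold gm
  set f : ℕ → Bool :=
    fun j => !decide (∃ k : Fin (e :: u').length, j + 1 = (e :: u').get k + (k : ℕ)) with hf
  have hubd : ∀ k : Fin u'.length, e < u'.get k :=
    fun k => (hu' _ (List.get_mem u' k)).1
  have hl : n + (e :: u').length - 1 = (e + 1) + ((n - e) + (u'.map (· - e)).length - 1) := by
    simp only [List.length_cons, List.length_map]
    omega
  have step1 : (List.range (n + (e :: u').length - 1)).map f
      = (List.range (e + 1)).map f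
        ++ (List.range ((n - e) + (u'.map (· - e)).length - 1)).map (fun i => f (e + 1 + i)) := by
    conv_lhs => rw [hl]
    rw [range_map_split]
  rw [step1]
  have h2 : e + 1 = (e - 1) + 1 + 1 := by omega
  have hpartA : (List.range (e + 1)).map f
      = List.replicate (e - 1) true ++ [false, true] := by
    conv_lhs => rw [h2]
    rw [range_succ_map, range_succ_map]
    have hA1 : (List.range (e - 1)).map f = List.replicate (e - 1) true := by
      apply map_range_eq_replicate
      intro i hi
      simp only [hf]
      have hP : ¬ (∃ k : Fin (e :: u').length, i + 1 = (e :: u').get k + (k : ℕ)) := by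
        rw [gm_cond]
        push_neg
        refine ⟨by omega, fun k => ?_⟩
        have := hubd k
        omega
      rw [decide_eq_false hP]
      rfl
    have hA2 : f (e - 1) = false := by
      have hP : ∃ k : Fin (e :: u').length, (e - 1) + 1 = (e :: u').get k + (k : ℕ) :=
        (gm_cond e u' (e - 1)).2 (Or.inl (by omega))
      simp only [hf]
      rw [decide_eq_true hP]
      rfl
    have hA3 : f ((e - 1) + 1) = true := by
      simp only [hf]
      have hP : ¬ (∃ k : Fin (e :: u').length, ((e - 1) + 1) + 1 = (e :: u').get k + (k : ℕ)) := by
        rw [gm_cond]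
        push_neg
        refine ⟨by omega, fun k => ?_⟩
        have := hubd k
        omega
      rw [decide_eq_false hP]
      rfl
    rw [hA1, hA2, hA3, List.append_assoc]
    rfl
  have hpartB : (List.range ((n - e) + (u'.map (· - e)).length - 1)).map (fun i => f (e + 1 + i))
      = gm (n - e) (u'.map (· - e)) := by
    unfold gm
    apply List.map_congr_left
    intro i _
    simp only [hf]
    congr 1
    apply decide_eq_decide.2
    rw [gm_cond]
    constructor
    · rintro (h | ⟨⟨k, hk⟩, hkk⟩)
      · omega
      · refine ⟨⟨k, by simpa using hk⟩, ?_⟩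
        simp only [List.get_eq_getElem, List.getElem_map]
        simp only [List.get_eq_getElem] at hkk
        have := hubd ⟨k, hk⟩
        simp only [List.get_eq_getElem] at this
        omega
    · rintro ⟨⟨k, hk⟩, hkk⟩
      right
      have hk' : k < u'.length := by simpa using hk
      refine ⟨⟨k, hk'⟩, ?_⟩
      simp only [List.get_eq_getElem, List.getElem_map] at hkk
      simp only [List.get_eq_getElem]
      have := hubd ⟨k, hk'⟩
      simp only [List.get_eq_getElem] at this
      omega
  rw [hpartA, hpartB, List.append_assoc]
  rfl

lemma emb_strip' (a : ℕ) (l β γ : List Bool) (h : l.length = a) :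
    emb (List.replicate a false ++ β) (l ++ γ) = emb β γ := by
  subst h
  exact emb_strip l β γ

lemma forall₂_of_getElem {α β : Type*} {R : α → β → Prop} :
    ∀ {l₁ : List α} {l₂ : List β}, l₁.length = l₂.length →
    (∀ (i : ℕ) (h₁ : i < l₁.length) (h₂ : i < l₂.length), R l₁[i] l₂[i]) →
    List.Forall₂ R l₁ l₂ := by
  intro l₁
  induction l₁ with
  | nil =>
    intro l₂ hl _
    cases l₂ with
    | nil => exact List.Forall₂.nil
    | cons b t => simp at hl
  | cons a t ih =>
    intro l₂ hl hget
    cases l₂ with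
    | nil => simp at hl
    | cons b t' =>
      refine List.Forall₂.cons (hget 0 (by simp) (by simp)) (ih (by simpa using hl) ?_)
      intro i h₁ h₂
      exact hget (i + 1) (by simpa using h₁) (by simpa using h₂)

lemma getElem_of_forall₂ {α β : Type*} {R : α → β → Prop} :
    ∀ {l₁ : List α} {l₂ : List β}, List.Forall₂ R l₁ l₂ →
    ∀ (i : ℕ) (h₁ : i < l₁.length) (h₂ : i < l₂.length), R l₁[i] l₂[i] := by
  intro l₁ l₂ h
  induction h with
  | nil => intro i h₁ _; simp at h₁
  | cons hab ht ih =>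
    intro i h₁ h₂
    cases i with
    | zero => simpa using hab
    | succ i' =>
      simp only [List.getElem_cons_succ]
      exact ih i' (by simpa using h₁) (by simpa using h₂)

lemma shift_sorted (e : ℕ) (u' : List ℕ) (h : ∀ x ∈ u', e < x)
    (hs : List.Pairwise (· < ·) u') : List.Pairwise (· < ·) (u'.map (· - e)) := by
  rw [List.pairwise_map]
  exact List.Pairwise.imp_of_mem (fun ha hb hab => by
    have := h _ ha; omega) hs

lemma count_true_gm : ∀ (m : ℕ) (u : List ℕ) (n : ℕ), u.length ≤ m → u ≠ [] →
    List.Pairwise (· < ·) u → (∀ x ∈ u, 1 ≤ x ∧ x ≤ n) →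
    (gm n u).count true = n - 1 := by
  intro m
  induction m with
  | zero =>
    intro u n hl hne _ _
    cases u
    · exact absurd rfl hne
    · simp at hl
  | succ k ih =>
    intro u n hl hne hsort hbd
    rcases u with _ | ⟨e, u'⟩
    · exact absurd rfl hne
    rcases List.pairwise_cons.1 hsort with ⟨hlt, hsort'⟩
    have he := hbd e (by simp)
    cases u' with
    | nil =>
      rw [gm_single n e he.1 he.2]
      unfold cvec
      simp [List.count_replicate, List.count_cons]
      omega
    | cons f t =>
      have hbd' : ∀ x ∈ f :: t, e < x ∧ x ≤ n :=
        fun x hx => ⟨hlt x hx, (hbd x (List.mem_cons_of_mem _ hx)).2⟩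
      have hlt_n : e < n := by
        have := hbd' f (by simp)
        omega
      rw [gm_cons n e (f :: t) he.1 hbd' (by simp)]
      have hIH := ih ((f :: t).map (· - e)) (n - e) (by simpa using by simp at hl ⊢; omega)
        (by simp) (shift_sorted e (f :: t) (fun x hx => (hbd' x hx).1) hsort')
        (by
          intro x hx
          rcases List.mem_map.1 hx with ⟨y, hy, rfl⟩
          have := hbd' y hy
          omega)
      rw [List.count_append, List.count_cons, List.count_cons, hIH, List.count_replicate]
      simp
      omega

lemma emb_bl_gm : ∀ (m : ℕ) (u : List ℕ) (n : ℕ), u.length ≤ m → u ≠ [] →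
    List.Pairwise (· < ·) u → (∀ x ∈ u, 1 ≤ x ∧ x ≤ n) →
    emb (bl n u) (gm n u) = false := by
  intro m
  induction m with
  | zero =>
    intro u n hl hne _ _
    cases u
    · exact absurd rfl hne
    · simp at hl
  | succ k ih =>
    intro u n hl hne hsort hbd
    rcases u with _ | ⟨e, u'⟩
    · exact absurd rfl hne
    rcases List.pairwise_cons.1 hsort with ⟨hlt, hsort'⟩
    have he := hbd e (by simp)
    rw [bl_cons n e u' he.1 he.2 (fun x hx => hlt x hx)]
    cases u' with
    | nil =>
      rw [gm_single n e he.1 he.2]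
      unfold cvec
      rw [List.map_nil, bl_nil]
      rw [emb_strip' (e - 1) (List.replicate (e - 1) true) _ _ (by simp)]
      rw [emb_true_false]
      rw [Bool.eq_false_iff]
      intro hco
      have := emb_length _ _ hco
      simp at this
    | cons f t =>
      have hbd' : ∀ x ∈ f :: t, e < x ∧ x ≤ n :=
        fun x hx => ⟨hlt x hx, (hbd x (List.mem_cons_of_mem _ hx)).2⟩
      rw [gm_cons n e (f :: t) he.1 hbd' (by simp)]
      rw [emb_strip' (e - 1) (List.replicate (e - 1) true) _ _ (by simp)]
      rw [emb_true_false, emb_true_true]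
      exact ih ((f :: t).map (· - e)) (n - e) (by simp at hl ⊢; omega) (by simp)
        (shift_sorted e (f :: t) (fun x hx => (hbd' x hx).1) hsort')
        (by
          intro x hx
          rcases List.mem_map.1 hx with ⟨y, hy, rfl⟩
          have := hbd' y hy
          omega)

lemma emb_stripT' (a : ℕ) (β γ : List Bool) (h : emb β γ = true) :
    emb (List.replicate a true ++ β) (List.replicate a true ++ γ) = true := by
  rw [emb_stripT]
  exact h

lemma emb_cvec_gm : ∀ (m : ℕ) (u : List ℕ) (n e : ℕ), u.length ≤ m → e ∈ u →
    List.Pairwise (· < ·) u → (∀ x ∈ u, 1 ≤ x ∧ x ≤ n) →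
    emb (cvec n e) (gm n u) = true := by
  intro m
  induction m with
  | zero =>
    intro u n e hl hmem _ _
    cases u
    · simp at hmem
    · simp at hl
  | succ k ih =>
    intro u n e hl hmem hsort hbd
    rcases u with _ | ⟨e₀, u'⟩
    · simp at hmem
    rcases List.pairwise_cons.1 hsort with ⟨hlt, hsort'⟩
    have he₀ := hbd e₀ (by simp)
    rcases List.mem_cons.1 hmem with rfl | hmem'
    · -- e = e₀
      cases u' with
      | nil =>
        rw [gm_single n e he₀.1 he₀.2]
        exact emb_refl _
      | cons f t =>
        have hbd' : ∀ x ∈ f :: t, e < x ∧ x ≤ n :=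
          fun x hx => ⟨hlt x hx, (hbd x (List.mem_cons_of_mem _ hx)).2⟩
        have hlt_n : e < n := by
          have := hbd' f (by simp)
          omega
        rw [gm_cons n e (f :: t) he₀.1 hbd' (by simp)]
        unfold cvec
        apply emb_stripT'
        rw [emb_false_cons]
        apply emb_T_count
        have hcnt := count_true_gm k ((f :: t).map (· - e)) (n - e)
          (by simp at hl ⊢; omega) (by simp)
          (shift_sorted e (f :: t) (fun x hx => (hbd' x hx).1) hsort')
          (by
            intro x hx
            rcases List.mem_map.1 hx with ⟨y, hy, rfl⟩
            have := hbd' y hy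
            omega)
        rw [List.count_cons, hcnt]
        simp
        omega
    · -- e ∈ u'
      have hne' : u' ≠ [] := by
        intro h
        rw [h] at hmem'
        simp at hmem'
      have hbd' : ∀ x ∈ u', e₀ < x ∧ x ≤ n :=
        fun x hx => ⟨hlt x hx, (hbd x (List.mem_cons_of_mem _ hx)).2⟩
      have he₀e : e₀ < e := hlt e hmem'
      have hen : e ≤ n := (hbd e (List.mem_cons_of_mem _ hmem')).2
      rw [gm_cons n e₀ u' he₀.1 hbd' hne']
      have hsplit : cvec n e = List.replicate (e₀ - 1) true
          ++ true :: cvec (n - e₀) (e - e₀) := by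
        unfold cvec
        have h1 : e - 1 = (e₀ - 1) + ((e - e₀ - 1) + 1) := by omega
        rw [h1, List.replicate_add, List.replicate_succ]
        have h2 : (n - e₀) - (e - e₀) = n - e := by omega
        have h3 : (e - e₀) - 1 = e - e₀ - 1 := by omega
        rw [h2, h3]
        simp [List.append_assoc]
      rw [hsplit]
      apply emb_stripT'
      rw [emb_true_false, emb_true_true]
      exact ih (u'.map (· - e₀)) (n - e₀) (e - e₀) (by simp at hl ⊢; omega)
        (List.mem_map.2 ⟨e, hmem', rfl⟩)
        (shift_sorted e₀ u' (fun x hx => (hbd' x hx).1) hsort')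
        (by
          intro x hx
          rcases List.mem_map.1 hx with ⟨y, hy, rfl⟩
          have := hbd' y hy
          omega)

lemma decode_blocks : ∀ (γ X : List Bool), X.Sublist (blocks γ) → X.count false = γ.length →
    ∃ β, X = blocks β ∧ List.Forall₂ ble β γ := by
  intro γ
  induction γ with
  | nil =>
    intro X h hc
    have hX : X = [] := List.sublist_nil.1 (by simpa using h)
    exact ⟨[], by simp [hX], List.Forall₂.nil⟩
  | cons c γ' ih =>
    intro X h hc
    simp only [List.length_cons] at hc
    cases c with
    | false =>
      rw [blocks_false_cons] at h
      rcases List.sublist_cons_iff.1 h with h1 | ⟨r, rfl, h2⟩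
      · exfalso
        have hle := h1.count_le false
        rw [count_false_blocks] at hle
        omega
      · have hc' : r.count false = γ'.length := by
          simp [List.count_cons] at hc
          omega
        obtain ⟨β', rfl, hF⟩ := ih r h2 hc'
        exact ⟨false :: β', rfl, List.Forall₂.cons (ble_refl false) hF⟩
    | true =>
      rw [blocks_true_cons] at h
      rcases List.sublist_cons_iff.1 h with h1 | ⟨r, rfl, h2⟩
      · exfalso
        have hle := h1.count_le false
        simp only [List.count_cons, count_false_blocks] at hle
        simp at hle
        omega
      · rcases List.sublist_cons_iff.1 h2 with h3 | ⟨r', rfl, h4⟩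
        · have hc' : r.count false = γ'.length := by
            simp [List.count_cons] at hc
            omega
          obtain ⟨β', rfl, hF⟩ := ih r h3 hc'
          exact ⟨false :: β', rfl, List.Forall₂.cons (ble_true false) hF⟩
        · have hc' : r'.count false = γ'.length := by
            simp [List.count_cons] at hc
            omega
          obtain ⟨β'', rfl, hF⟩ := ih r' h4 hc'
          exact ⟨true :: β'', rfl, List.Forall₂.cons (ble_refl true) hF⟩

lemma length_cvec {n e : ℕ} (he1 : 1 ≤ e) (hen : e ≤ n) : (cvec n e).length = n := by
  simp [cvec]
  omega

lemma getElem_cvec {n e i : ℕ} (he1 : 1 ≤ e) (hen : e ≤ n)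
    (hi : i < (cvec n e).length) :
    (cvec n e)[i] = !decide (i + 1 = e) := by
  have hco : cvec n e = gm n [e] := (gm_single n e he1 hen).symm
  rw [List.getElem_of_eq hco hi]
  unfold gm
  rw [List.getElem_map]
  congr 1
  apply decide_eq_decide.2
  rw [gm_cond]
  simp

lemma sort_props {n : ℕ} {E : Finset ℕ} (hsub : E ⊆ Finset.Icc 1 n) (hne : E.Nonempty) :
    (E.sort (· ≤ ·)) ≠ [] ∧ List.Pairwise (· < ·) (E.sort (· ≤ ·)) ∧
      (∀ x ∈ E.sort (· ≤ ·), 1 ≤ x ∧ x ≤ n) := by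
  refine ⟨?_, List.sortedLT_iff_pairwise.1 (Finset.sortedLT_sort E), ?_⟩
  · obtain ⟨e, he⟩ := hne
    exact List.ne_nil_of_mem ((Finset.mem_sort _).2 he)
  · intro x hx
    have := hsub ((Finset.mem_sort _).1 hx)
    simpa [Finset.mem_Icc] using this

lemma bl_sort_eq_bv (n : ℕ) (E : Finset ℕ) : bl n (E.sort (· ≤ ·)) = bv n E := by
  unfold bl bv
  apply List.map_congr_left
  intro i _
  exact decide_eq_decide.2 (Finset.mem_sort _)

lemma count_false_psi (n : ℕ) (U : Finset ℕ) : (psi n U).count false = n := by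
  rw [psi_eq, count_false_blocks, length_bv]

lemma bv_le_top (n : ℕ) (U : Finset ℕ) :
    List.Forall₂ ble (bv n U) (List.replicate n true) := by
  apply forall₂_of_getElem (by simp)
  intro i h₁ h₂
  rw [List.getElem_replicate]
  exact ble_true _

lemma bv_mono {n : ℕ} {U W : Finset ℕ} (h : U ⊆ W) :
    List.Forall₂ ble (bv n U) (bv n W) := by
  apply forall₂_of_getElem (by simp)
  intro i h₁ h₂
  simp only [bv, List.getElem_map, List.getElem_range]
  intro hd
  rw [decide_eq_true_eq] at hd
  exact decide_eq_true (h hd)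

section main

variable {n : ℕ} {𝓔 : Finset (Finset ℕ)}

lemma cs_psi (hE : ∀ E ∈ 𝓔, E ⊆ Finset.Icc 1 n ∧ E.Nonempty)
    {U : Finset ℕ} (hind : ∀ E ∈ 𝓔, ¬ E ⊆ U) :
    IsCS (SH n 𝓔) (psi n U) := by
  intro S hS
  rcases Set.mem_insert_iff.1 hS with rfl | hS'
  · rw [psi_eq, pow01_eq]
    apply sublist_of_emb
    exact emb_anti _ _ _ (bv_le_top n U) (emb_refl _)
  · obtain ⟨E, hEm, rfl⟩ := hS'
    obtain ⟨hsub, hne⟩ := hE E hEm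
    obtain ⟨hune, husort, hubd⟩ := sort_props hsub hne
    obtain ⟨e, heE, heU⟩ := Finset.not_subset.1 (hind E hEm)
    have heIcc := hsub heE
    rw [Finset.mem_Icc] at heIcc
    have hF : List.Forall₂ ble (bv n U) (cvec n e) := by
      apply forall₂_of_getElem (by rw [length_bv, length_cvec heIcc.1 heIcc.2])
      intro i h₁ h₂
      rw [getElem_cvec heIcc.1 heIcc.2 h₂]
      simp only [bv, List.getElem_map, List.getElem_range]
      intro hd
      rw [decide_eq_true_eq] at hd
      have : ¬ (i + 1 = e) := fun hh => heU (hh ▸ hd)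
      rw [decide_eq_false this]
      rfl
    have hemb : emb (cvec n e) (gm n (E.sort (· ≤ ·))) = true :=
      emb_cvec_gm (E.sort (· ≤ ·)).length _ n e le_rfl
        ((Finset.mem_sort _).2 heE) husort hubd
    rw [psi_eq, SE_eq]
    exact sublist_of_emb _ _ (emb_anti _ _ _ hF hemb)

lemma cs_pow01_pred (hn : 2 ≤ n) (hE : ∀ E ∈ 𝓔, E ⊆ Finset.Icc 1 n ∧ E.Nonempty) :
    IsCS (SH n 𝓔) (pow01 (n - 1)) := by
  intro S hS
  rcases Set.mem_insert_iff.1 hS with rfl | hS'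
  · rw [pow01_eq, pow01_eq]
    apply sublist_of_emb
    apply emb_T_count
    simp [List.count_replicate]
  · obtain ⟨E, hEm, rfl⟩ := hS'
    obtain ⟨hsub, hne⟩ := hE E hEm
    obtain ⟨hune, husort, hubd⟩ := sort_props hsub hne
    rw [pow01_eq, SE_eq]
    apply sublist_of_emb
    apply emb_T_count
    rw [count_true_gm (E.sort (· ≤ ·)).length _ n le_rfl hune husort hubd]

lemma mem_SH_blocks (hn : 2 ≤ n) {S : List Bool} (hS : S ∈ SH n 𝓔) :
    ∃ γ, γ ≠ [] ∧ S = blocks γ := by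
  rcases Set.mem_insert_iff.1 hS with rfl | hS'
  · refine ⟨List.replicate n true, ?_, pow01_eq n⟩
    have : (List.replicate n (true : Bool)).length = n := by simp
    intro hcon
    rw [hcon] at this
    simp at this
    omega
  · obtain ⟨E, hEm, rfl⟩ := hS'
    refine ⟨gm n (E.sort (· ≤ ·)), ?_, SE_eq n _⟩
    have : (gm n (E.sort (· ≤ ·))).length = n + (E.sort (· ≤ ·)).length - 1 := by simp
    intro hcon
    rw [hcon] at this
    simp at this
    omega

lemma blocks_ne_head {γ : List Bool} (h : γ ≠ []) : ∃ t, blocks γ = false :: t := by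
  rcases blocks_head γ with he | ht
  · exact absurd (blocks_eq_nil_iff.1 he) h
  · exact ht

/-- decode a common subsequence with n zeros as ψ of an independent set -/
lemma decode (hn : 2 ≤ n) (hE : ∀ E ∈ 𝓔, E ⊆ Finset.Icc 1 n ∧ E.Nonempty)
    {Y : List Bool} (hCS : IsCS (SH n 𝓔) Y) (hcnt : Y.count false = n) :
    ∃ W, W ⊆ Finset.Icc 1 n ∧ (∀ E ∈ 𝓔, ¬ E ⊆ W) ∧ Y = psi n W := by
  have hsub : Y.Sublist (blocks (List.replicate n true)) := by
    rw [← pow01_eq]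
    exact hCS _ (Set.mem_insert _ _)
  obtain ⟨β, rfl, hF⟩ := decode_blocks _ _ hsub (by simpa using hcnt)
  have hlen : β.length = n := by
    have := hF.length_eq
    simpa using this
  set W : Finset ℕ := (Finset.Icc 1 n).filter (fun m => β.getD (m - 1) false = true)
    with hW
  have hbvW : bv n W = β := by
    apply List.ext_getElem (by simp [hlen])
    intro i h₁ h₂
    simp only [bv, List.getElem_map, List.getElem_range]
    have hiW : (i + 1 ∈ W) ↔ (β.getD i false = true) := by
      rw [hW, Finset.mem_filter, Finset.mem_Icc]
      have h2 : i + 1 - 1 = i := by omega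
      rw [h2]
      have h3 : 1 ≤ i + 1 ∧ i + 1 ≤ n := by
        rw [hlen] at h₂
        omega
      tauto
    rw [List.getD_eq_getElem β false h₂] at hiW
    by_cases hmem : i + 1 ∈ W
    · rw [decide_eq_true hmem]
      exact (hiW.1 hmem).symm
    · rw [decide_eq_false hmem]
      cases h' : β[i]
      · rfl
      · exact absurd (hiW.2 h') hmem
  have hYpsi : blocks β = psi n W := by rw [psi_eq, hbvW]
  refine ⟨W, Finset.filter_subset _ _, ?_, hYpsi⟩
  intro E hEm hEW
  obtain ⟨hsubE, hneE⟩ := hE E hEm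
  obtain ⟨hune, husort, hubd⟩ := sort_props hsubE hneE
  have hYSE : (blocks β).Sublist (SE n (E.sort (· ≤ ·))) :=
    hCS _ (Set.mem_insert_iff.2 (Or.inr ⟨E, hEm, rfl⟩))
  have hsubEY : (blocks (bv n E)).Sublist (blocks β) := by
    rw [← hbvW]
    exact sublist_of_emb _ _ (emb_anti _ _ _ (bv_mono hEW) (emb_refl _))
  have hchain : (blocks (bv n E)).Sublist (blocks (gm n (E.sort (· ≤ ·)))) := by
    refine hsubEY.trans ?_
    rw [← SE_eq]
    exact hYSE
  have hembE : emb (bv n E) (gm n (E.sort (· ≤ ·))) = true :=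
    blocks_sublist_iff.1 hchain
  rw [← bl_sort_eq_bv] at hembE
  rw [emb_bl_gm (E.sort (· ≤ ·)).length _ n le_rfl hune husort hubd] at hembE
  exact absurd hembE (by simp)

lemma psi_mono {U W : Finset ℕ} (h : U ⊆ W) : (psi n U).Sublist (psi n W) := by
  rw [psi_eq, psi_eq]
  exact sublist_of_emb _ _ (emb_anti _ _ _ (bv_mono h) (emb_refl _))

lemma subset_of_psi_sublist {U W : Finset ℕ} (hU : U ⊆ Finset.Icc 1 n)
    (h : (psi n U).Sublist (psi n W)) : U ⊆ W := by
  rw [psi_eq, psi_eq] at h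
  obtain ⟨β₂, heq, hF⟩ := decode_blocks _ _ h (by rw [count_false_blocks, length_bv, length_bv])
  have hβ₂ : β₂ = bv n U := blocks_injective _ _ heq.symm
  subst hβ₂
  intro m hm
  have hmIcc := hU hm
  rw [Finset.mem_Icc] at hmIcc
  have hi : m - 1 < (bv n U).length := by
    rw [length_bv]
    omega
  have hi' : m - 1 < (bv n W).length := by
    rw [length_bv]
    omega
  have := getElem_of_forall₂ hF (m - 1) hi hi'
  simp only [bv, List.getElem_map, List.getElem_range] at this
  have hm1 : m - 1 + 1 = m := by omega
  rw [hm1] at this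
  have := this (decide_eq_true hm)
  rw [decide_eq_true_eq] at this
  exact this

lemma psi_inj {U W : Finset ℕ} (hU : U ⊆ Finset.Icc 1 n) (hW : W ⊆ Finset.Icc 1 n)
    (h : psi n U = psi n W) : U = W := by
  apply Finset.Subset.antisymm
  · exact subset_of_psi_sublist hU (h ▸ List.Sublist.refl _)
  · exact subset_of_psi_sublist hW (h ▸ List.Sublist.refl _)

end main

section final

variable {n : ℕ} {𝓔 : Finset (Finset ℕ)}

lemma mcs_struct (hn : 2 ≤ n) {X : List Bool} (hM : IsMCS (SH n 𝓔) X) :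
    NoTT X ∧ ∃ X', X = false :: X' := by
  have hhead : ∃ X', X = false :: X' := by
    by_contra hcon
    have hX : X = [] ∨ ∃ t, X = true :: t := by
      cases X with
      | nil => exact Or.inl rfl
      | cons b t =>
        cases b
        · exact absurd ⟨t, rfl⟩ hcon
        · exact Or.inr ⟨t, rfl⟩
    have hCS' : IsCS (SH n 𝓔) (false :: X) := by
      intro S hS
      obtain ⟨γ, hγne, rfl⟩ := mem_SH_blocks hn hS
      obtain ⟨S', hS'⟩ := blocks_ne_head hγne
      rw [hS']
      have hXS := hM.1 _ hS
      rw [hS'] at hXS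
      exact cons_false_sub hXS hX
    have := hM.2 _ hCS' (List.sublist_cons_self false X)
    exact absurd this (List.cons_ne_self false X)
  refine ⟨?_, hhead⟩
  by_contra hcon
  unfold NoTT at hcon
  rw [show List.Chain' (fun a b : Bool => a = false ∨ b = false) X ↔ List.IsChain (fun a b : Bool => a = false ∨ b = false) X from Iff.rfl, List.isChain_iff_getElem] at hcon
  push_neg at hcon
  obtain ⟨i, hi, hrel⟩ := hcon
  obtain ⟨ha, hb⟩ := hrel
  rw [ne_eq, Bool.not_eq_false] at ha hb
  have hi1 : i < X.length := by omega
  have hi2 : i + 1 < X.length := by omega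
  have hdec : X = X.take i ++ true :: true :: X.drop (i + 2) := by
    have h3 := List.take_append_drop i X
    rw [List.drop_eq_getElem_cons hi1, ha, List.drop_eq_getElem_cons hi2, hb] at h3
    exact h3.symm
  set A := X.take i with hA
  set B := X.drop (i + 2) with hB
  have hYCS : IsCS (SH n 𝓔) (A ++ true :: false :: true :: B) := by
    intro S hS
    obtain ⟨γ, hγne, rfl⟩ := mem_SH_blocks hn hS
    have hXS := hM.1 _ hS
    rw [hdec] at hXS
    exact insert_false_TT _ _ _ (noTT_blocks γ) hXS
  have hXY : X.Sublist (A ++ true :: false :: true :: B) := by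
    conv_lhs => rw [hdec]
    exact List.Sublist.append_left (((List.Sublist.refl (true :: B)).cons false).cons₂ true) A
  have hEq := hM.2 _ hYCS hXY
  have hlen := congrArg List.length hEq
  rw [hdec] at hlen
  simp at hlen

end final

end Stmt13

/-- for a hypergraph H on V = {1,...,n}, n ≥ 2, with no
independent set of cardinality n−1, ψ is a bijection from the maximal
independent sets of H onto the maximal common subsequences of S(H) different
from (01)^{n−1}. -/
theorem stmt_13 (n : ℕ) (hn : 2 ≤ n) (𝓔 : Finset (Finset ℕ))
    (hE : ∀ E ∈ 𝓔, E ⊆ Finset.Icc 1 n ∧ E.Nonempty)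
    (hno : ∀ U : Finset ℕ, U ⊆ Finset.Icc 1 n → (∀ E ∈ 𝓔, ¬ E ⊆ U) →
      U.card ≠ n - 1) :
    Set.BijOn (psi n)
      {U : Finset ℕ | U ⊆ Finset.Icc 1 n ∧ (∀ E ∈ 𝓔, ¬ E ⊆ U) ∧
        ∀ W : Finset ℕ, W ⊆ Finset.Icc 1 n → (∀ E ∈ 𝓔, ¬ E ⊆ W) → U ⊆ W → W = U}
      {X : List Bool | IsMCS (SH n 𝓔) X ∧ X ≠ pow01 (n - 1)} := by
  classical
  refine ⟨?_, ?_, ?_⟩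
  · -- MapsTo
    rintro U ⟨hUsub, hUind, hUmax⟩
    refine ⟨⟨Stmt13.cs_psi hE hUind, ?_⟩, ?_⟩
    · intro Y hYCS hXY
      have hle : Y.count false ≤ n := by
        have h1 := (hYCS _ (Set.mem_insert _ _)).count_le false
        rw [Stmt13.pow01_eq, Stmt13.count_false_blocks] at h1
        simpa using h1
      have hge : n ≤ Y.count false := by
        have h2 := hXY.count_le false
        rwa [Stmt13.count_false_psi] at h2
      obtain ⟨W, hWsub, hWind, rfl⟩ := Stmt13.decode hn hE hYCS (by omega)
      rw [hUmax W hWsub hWind (Stmt13.subset_of_psi_sublist hUsub hXY)]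
    · intro hcon
      have := congrArg (List.count false) hcon
      rw [Stmt13.count_false_psi, Stmt13.pow01_eq, Stmt13.count_false_blocks] at this
      simp at this
      omega
  · -- InjOn
    rintro U ⟨hU, -, -⟩ W ⟨hW, -, -⟩ h
    exact Stmt13.psi_inj hU hW h
  · -- SurjOn
    rintro X ⟨hM, hneq⟩
    obtain ⟨hnoTT, X', hX'⟩ := Stmt13.mcs_struct hn hM
    have hhead : X = [] ∨ X.head? = some false := by
      rw [hX']
      exact Or.inr rfl
    have hcle : X.count false ≤ n := by
      have h1 := (hM.1 _ (Set.mem_insert _ _)).count_le false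
      rw [Stmt13.pow01_eq, Stmt13.count_false_blocks] at h1
      simpa using h1
    have hcnt : X.count false = n := by
      by_contra hc
      have hsub1 : X.Sublist (Stmt13.blocks (List.replicate (X.count false) true)) :=
        Stmt13.sub_pow_of_noTT X.length X le_rfl hnoTT hhead
      have hsub2 : (Stmt13.blocks (List.replicate (X.count false) true)).Sublist
          (Stmt13.blocks (List.replicate (n - 1) true)) := by
        apply Stmt13.sublist_of_emb
        apply Stmt13.emb_T_count
        simp [List.count_replicate]
        omega
      have hXp : X.Sublist (pow01 (n - 1)) := by
        rw [Stmt13.pow01_eq]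
        exact hsub1.trans hsub2
      exact hneq (hM.2 _ (Stmt13.cs_pow01_pred hn hE) hXp).symm
    obtain ⟨W, hWsub, hWind, hXW⟩ := Stmt13.decode hn hE hM.1 hcnt
    refine ⟨W, ⟨hWsub, hWind, ?_⟩, hXW.symm⟩
    intro W' hW'sub hW'ind hWW'
    apply Stmt13.psi_inj hW'sub hWsub
    have hsub' : X.Sublist (psi n W') := by
      rw [hXW]
      exact Stmt13.psi_mono hWW'
    have hfin := hM.2 _ (Stmt13.cs_psi hE hW'ind) hsub'
    rw [hfin, hXW]
end

section
/- Let H = (V, 𝓔) be a hypergraph with |V| = n ≥ 2 and no vertex belonging to every hyperedge. Then the string (01)^{n−1} is a maximal common subsequence of S(H). -/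
namespace Stmt14Aux

def z : List Bool := [false]
def zo : List Bool := [false, true]

lemma zo_ne_z : zo ≠ z := by decide

lemma pow01_zero : pow01 0 = [] := rfl

lemma pow01_succ (n : ℕ) : pow01 (n + 1) = false :: true :: pow01 n := rfl

lemma pow01_append (a b : ℕ) : pow01 (a + b) = pow01 a ++ pow01 b := by
  unfold pow01
  rw [List.replicate_add, List.flatten_append]

lemma count_true_pow01 (n : ℕ) : (pow01 n).count true = n := by
  induction n with
  | zero => rfl
  | succ n ih => simp [pow01_succ, List.count_cons, ih]

lemma count_false_pow01 (n : ℕ) : (pow01 n).count false = n := by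
  induction n with
  | zero => rfl
  | succ n ih => simp [pow01_succ, List.count_cons, ih]

lemma length_pow01 (n : ℕ) : (pow01 n).length = 2 * n := by
  induction n with
  | zero => rfl
  | succ n ih => simp [pow01_succ, ih]; omega

lemma length_eq_counts (Y : List Bool) : Y.length = Y.count true + Y.count false := by
  induction Y with
  | nil => rfl
  | cons b Y ih =>
    rw [List.length_cons, List.count_cons, List.count_cons, ih]
    cases b <;> simp <;> omega

/-- every block is `z` or `zo` -/
def Ok (L : List (List Bool)) : Prop := ∀ B ∈ L, B = z ∨ B = zo

lemma ok_cons {B : List Bool} {L : List (List Bool)} (h : Ok (B :: L)) : Ok L :=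
  fun C hC => h C (List.mem_cons_of_mem _ hC)

lemma count_true_flatten : ∀ (L : List (List Bool)), Ok L → L.flatten.count true = L.count zo
  | [], _ => rfl
  | B :: L', h => by
    have ih := count_true_flatten L' (ok_cons h)
    rcases h B (List.mem_cons_self) with hB | hB <;> subst hB
    · rw [List.flatten_cons, List.count_append, ih, List.count_cons_of_ne zo_ne_z.symm]
      simp [z]
    · rw [List.flatten_cons, List.count_append, ih, List.count_cons_self]
      simp [zo]
      omega

lemma pow01_count_sublist : ∀ (L : List (List Bool)), Ok L → (pow01 (L.count zo)).Sublist L.flatten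
  | [], _ => by simp [pow01_zero]
  | B :: L', h => by
    have ih := pow01_count_sublist L' (ok_cons h)
    rcases h B (List.mem_cons_self) with hB | hB <;> subst hB
    · rw [List.flatten_cons, List.count_cons_of_ne zo_ne_z.symm]
      exact ih.trans (List.sublist_append_right _ _)
    · rw [List.flatten_cons, List.count_cons_self, pow01_succ]
      exact (ih.cons₂ true).cons₂ false

/-- the pattern string, with an optional already-consumed leading `true` -/
def Xab (t : Bool) (a b : ℕ) : List Bool :=
  cond t (true :: (pow01 a ++ false :: pow01 b)) (pow01 a ++ false :: pow01 b)

lemma Xab_true (a b : ℕ) : Xab true a b = true :: (pow01 a ++ false :: pow01 b) := rfl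
lemma Xab_false (a b : ℕ) : Xab false a b = pow01 a ++ false :: pow01 b := rfl

lemma count_true_Xab (t : Bool) (a b : ℕ) : (Xab t a b).count true = a + b + t.toNat := by
  cases t <;>
    simp [Xab, List.count_append, List.count_cons, count_true_pow01]

lemma count_contr {L : List (List Bool)} (hok : Ok L) {t : Bool} {a b : ℕ}
    (h : (Xab t a b).Sublist L.flatten) (hc : L.count zo < a + b + t.toNat) : False := by
  have := h.count_le true
  rw [count_true_flatten L hok, count_true_Xab] at this
  omega

lemma key : ∀ (L : List (List Bool)) (t : Bool) (a b : ℕ), Ok L →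
    a + b + t.toNat = L.count zo →
    (Xab t a b).Sublist L.flatten →
    ∃ L₁ L₂, L = L₁ ++ z :: L₂ ∧ L₁.count zo = a + t.toNat := by
  intro L
  induction L with
  | nil =>
    intro t a b _ hcnt hsub
    exfalso
    have h0 : Xab t a b = [] := List.sublist_nil.mp (by simpa using hsub)
    cases t <;> simp [Xab_true, Xab_false] at h0
  | cons B L' ih =>
    intro t a b hok hcnt hsub
    have hok' : Ok L' := ok_cons hok
    rcases hok B (List.mem_cons_self) with hB | hB <;> subst hB
    · -- B = z
      rw [List.count_cons_of_ne zo_ne_z.symm] at hcnt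
      have hsub' : (Xab t a b).Sublist (false :: L'.flatten) := by
        simpa [z, List.flatten_cons] using hsub
      cases t with
      | true =>
        rw [Xab_true] at hsub'
        cases hsub' with
        | cons _ h =>
          obtain ⟨L₁, L₂, hL, hc⟩ := ih true a b hok' hcnt (by rw [Xab_true]; exact h)
          exact ⟨z :: L₁, L₂, by rw [hL]; rfl,
            by rw [List.count_cons_of_ne zo_ne_z.symm]; exact hc⟩
      | false =>
        cases a with
        | zero => exact ⟨[], L', rfl, by simp⟩
        | succ a' =>
          rw [Xab_false, pow01_succ, List.cons_append, List.cons_append] at hsub'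
          cases hsub' with
          | cons _ h =>
            obtain ⟨L₁, L₂, hL, hc⟩ := ih false (a' + 1) b hok' hcnt
              (by rw [Xab_false, pow01_succ, List.cons_append, List.cons_append]; exact h)
            exact ⟨z :: L₁, L₂, by rw [hL]; rfl,
              by rw [List.count_cons_of_ne zo_ne_z.symm]; exact hc⟩
          | cons_cons _ h =>
            obtain ⟨L₁, L₂, hL, hc⟩ := ih true a' b hok' (by simp only [Bool.toNat_true, Bool.toNat_false] at hcnt ⊢; omega)
              (by rw [Xab_true]; exact h)
            refine ⟨z :: L₁, L₂, by rw [hL]; rfl, ?_⟩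
            rw [List.count_cons_of_ne zo_ne_z.symm]
            simp only [Bool.toNat_true, Bool.toNat_false] at hc ⊢
            omega
    · -- B = zo
      rw [List.count_cons_self] at hcnt
      have hsub' : (Xab t a b).Sublist (false :: true :: L'.flatten) := by
        simpa [zo, List.flatten_cons] using hsub
      cases t with
      | true =>
        rw [Xab_true] at hsub'
        cases hsub' with
        | cons _ h =>
          cases h with
          | cons _ h2 =>
            exact (count_contr hok' (t := true) (a := a) (b := b)
              (by rw [Xab_true]; exact h2)
              (by simp only [Bool.toNat_true, Bool.toNat_false] at hcnt ⊢; omega)).elim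
          | cons_cons _ h2 =>
            obtain ⟨L₁, L₂, hL, hc⟩ := ih false a b hok' (by simp only [Bool.toNat_true, Bool.toNat_false] at hcnt ⊢; omega)
              (by rw [Xab_false]; exact h2)
            refine ⟨zo :: L₁, L₂, by rw [hL]; rfl, ?_⟩
            rw [List.count_cons_self]
            simp only [Bool.toNat_true, Bool.toNat_false] at hc ⊢
            omega
      | false =>
        cases a with
        | zero =>
          exfalso
          have hb : b = L'.count zo + 1 := by simpa using hcnt
          rw [Xab_false, pow01_zero, List.nil_append] at hsub'
          cases hsub' with
          | cons _ h =>
            cases h with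
            | cons _ h2 =>
              exact count_contr hok' (t := false) (a := 0) (b := b)
                (by rw [Xab_false, pow01_zero, List.nil_append]; exact h2) (by simp only [Bool.toNat_true, Bool.toNat_false] at hcnt ⊢; omega)
          | cons_cons _ h =>
            subst hb
            rw [pow01_succ] at h
            cases h with
            | cons _ h2 =>
              have : (pow01 (L'.count zo + 1)).count true ≤ L'.flatten.count true :=
                (pow01_succ _ ▸ h2 : (pow01 (L'.count zo + 1)).Sublist L'.flatten).count_le true
              rw [count_true_flatten L' hok', count_true_pow01] at this
              omega
        | succ a' =>
          rw [Xab_false, pow01_succ, List.cons_append, List.cons_append] at hsub'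
          cases hsub' with
          | cons _ h =>
            cases h with
            | cons _ h2 =>
              exact (count_contr hok' (t := false) (a := a' + 1) (b := b)
                (by rw [Xab_false, pow01_succ, List.cons_append, List.cons_append]; exact h2)
                (by simp only [Bool.toNat_true, Bool.toNat_false] at hcnt ⊢; omega)).elim
          | cons_cons _ h =>
            cases h with
            | cons _ h2 =>
              exact (count_contr hok' (t := true) (a := a') (b := b)
                (by rw [Xab_true]; exact h2)
                (by simp only [Bool.toNat_true, Bool.toNat_false] at hcnt ⊢; omega)).elim
            | cons_cons _ h2 =>
              obtain ⟨L₁, L₂, hL, hc⟩ := ih false a' b hok' (by simp only [Bool.toNat_true, Bool.toNat_false] at hcnt ⊢; omega)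
                (by rw [Xab_false]; exact h2)
              refine ⟨zo :: L₁, L₂, by rw [hL]; rfl, ?_⟩
              rw [List.count_cons_self]
              simp only [Bool.toNat_true, Bool.toNat_false] at hc ⊢
              omega

/-! ### Structure of `SE` -/

/-- the `j`-th block of `SE n u` -/
def blk (u : List ℕ) (j : ℕ) : List Bool :=
  if ∃ k : Fin u.length, j + 1 = u.get k + (k : ℕ) then z else zo

lemma SE_eq (n : ℕ) (u : List ℕ) :
    SE n u = ((List.range (n + u.length - 1)).map (blk u)).flatten := rfl

lemma ok_blk (u : List ℕ) (N : ℕ) : Ok ((List.range N).map (blk u)) := by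
  intro B hB
  simp only [List.mem_map] at hB
  obtain ⟨j, _, rfl⟩ := hB
  unfold blk
  split
  · exact Or.inl rfl
  · exact Or.inr rfl

lemma count_zo_map (u : List ℕ) : ∀ (l : List ℕ),
    ((l.map (blk u)).count zo) +
      l.countP (fun j => decide (∃ k : Fin u.length, j + 1 = u.get k + (k : ℕ))) = l.length
  | [] => rfl
  | j :: l => by
    have ih := count_zo_map u l
    by_cases hq : ∃ k : Fin u.length, j + 1 = u.get k + (k : ℕ)
    · rw [List.map_cons, show blk u j = z from if_pos hq, List.count_cons_of_ne zo_ne_z.symm,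
        List.countP_cons_of_pos (by simp only [decide_eq_true_eq]; exact hq),
        List.length_cons]
      omega
    · rw [List.map_cons, show blk u j = zo from if_neg hq, List.count_cons_self,
        List.countP_cons_of_neg (by simp only [decide_eq_true_eq]; exact hq),
        List.length_cons]
      omega

lemma countP_range (u : List ℕ) (hbd : ∀ x ∈ u, 1 ≤ x)
    (hinj : Function.Injective (fun k : Fin u.length => u.get k + (k : ℕ))) (N : ℕ) :
    (List.range N).countP (fun j => decide (∃ k : Fin u.length, j + 1 = u.get k + (k : ℕ)))
      = (Finset.univ.filter (fun k : Fin u.length => u.get k + (k : ℕ) ≤ N)).card := by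
  classical
  set g : Fin u.length → ℕ := fun k => u.get k + (k : ℕ) with hg
  have hg1 : ∀ k, 1 ≤ g k := fun k => by
    have h1 : 1 ≤ u.get k := hbd _ (u.get_mem k)
    have : u.get k ≤ g k := Nat.le_add_right _ _
    omega
  rw [List.countP_eq_length_filter]
  have hnd : ((List.range N).filter
      (fun j => decide (∃ k : Fin u.length, j + 1 = g k))).Nodup :=
    List.Nodup.filter _ (List.nodup_range)
  rw [← List.toFinset_card_of_nodup hnd, List.toFinset_filter]
  have htf : (List.range N).toFinset = Finset.range N := by
    ext x; simp
  rw [htf]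
  have himg : (Finset.range N).filter (fun j => (decide (∃ k : Fin u.length, j + 1 = g k)) = true)
      = Finset.image (fun k => g k - 1) (Finset.univ.filter fun k => g k ≤ N) := by
    ext x
    simp only [Finset.mem_filter, Finset.mem_range, Finset.mem_image, Finset.mem_univ,
      true_and, decide_eq_true_eq]
    constructor
    · rintro ⟨hx, k, hk⟩
      exact ⟨k, by omega, by omega⟩
    · rintro ⟨k, hkN, rfl⟩
      have := hg1 k
      exact ⟨by omega, k, by omega⟩
  rw [himg, Finset.card_image_of_injOn]
  intro k _ k' _ he
  apply hinj
  have h1 := hg1 k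
  have h2 := hg1 k'
  simp only [hg] at he h1 h2 ⊢
  omega

section WithSorted

variable {n : ℕ} {u : List ℕ}

lemma g_strictMono (hsrt : u.Pairwise (· < ·)) :
    StrictMono (fun k : Fin u.length => u.get k + (k : ℕ)) := by
  intro k k' hkk'
  have h1 : u.get k < u.get k' := hsrt.sortedLT.strictMono_get hkk'
  have hv : (k : ℕ) < (k' : ℕ) := hkk'
  show u.get k + (k : ℕ) < u.get k' + (k' : ℕ)
  omega

lemma count_zo_full (hn : 1 ≤ n) (hsrt : u.Pairwise (· < ·)) (hbd : ∀ x ∈ u, 1 ≤ x ∧ x ≤ n) :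
    (((List.range (n + u.length - 1)).map (blk u)).count zo) = n - 1 := by
  classical
  have hcp := countP_range u (fun x hx => (hbd x hx).1) (g_strictMono hsrt).injective
      (n + u.length - 1)
  have hfull : (Finset.univ.filter
      (fun k : Fin u.length => u.get k + (k : ℕ) ≤ n + u.length - 1)) = Finset.univ := by
    apply Finset.filter_true_of_mem
    intro k _
    have h1 : u.get k ≤ n := (hbd _ (u.get_mem k)).2
    have h2 : (k : ℕ) < u.length := k.isLt
    omega
  have hsum := count_zo_map u (List.range (n + u.length - 1))
  rw [hcp, hfull] at hsum
  simp only [Finset.card_univ, Fintype.card_fin, List.length_range] at hsum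
  omega

lemma count_true_SE (hn : 1 ≤ n) (hsrt : u.Pairwise (· < ·)) (hbd : ∀ x ∈ u, 1 ≤ x ∧ x ≤ n) :
    (SE n u).count true = n - 1 := by
  rw [SE_eq, count_true_flatten _ (ok_blk u _), count_zo_full hn hsrt hbd]

lemma pow01_sublist_SE (hn : 1 ≤ n) (hsrt : u.Pairwise (· < ·)) (hbd : ∀ x ∈ u, 1 ≤ x ∧ x ≤ n) :
    (pow01 (n - 1)).Sublist (SE n u) := by
  rw [SE_eq]
  have := pow01_count_sublist _ (ok_blk u (n + u.length - 1))
  rwa [count_zo_full hn hsrt hbd] at this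

lemma mem_of_sub (hn : 1 ≤ n) (hsrt : u.Pairwise (· < ·)) (hbd : ∀ x ∈ u, 1 ≤ x ∧ x ≤ n)
    (i b : ℕ) (hib : i + b = n - 1)
    (hs : (pow01 i ++ false :: pow01 b).Sublist (SE n u)) : (i + 1) ∈ u := by
  classical
  set m := n + u.length - 1 with hm
  set L := (List.range m).map (blk u) with hLdef
  have hok : Ok L := ok_blk u m
  have hcnt : i + b + (false : Bool).toNat = L.count zo := by
    rw [hLdef, count_zo_full hn hsrt hbd]
    simp [hib]
  obtain ⟨L₁, L₂, hL, hc⟩ := key L false i b hok hcnt (by rw [Xab_false]; exact hs)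
  simp only [Bool.toNat_false, Nat.add_zero] at hc
  set j := L₁.length with hj
  have hlenL : L.length = m := by simp [hLdef]
  have hjm : j < m := by
    have := congrArg List.length hL
    rw [hlenL] at this
    simp [hj] at this ⊢
    omega
  have hL₁ : L₁ = (List.range j).map (blk u) := by
    have h1 : L.take j = L₁ := by rw [hL, hj]; exact List.take_left
    rw [← h1, hLdef, ← List.map_take, List.take_range, Nat.min_eq_left hjm.le]
  have hfj : blk u j = z := by
    have h1 : L[j]? = some (blk u j) := by
      rw [hLdef]
      rw [List.getElem?_map]
      simp [List.getElem?_range hjm]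
    have h2 : L[j]? = some z := by
      rw [hL, List.getElem?_append_right (le_of_eq hj.symm)]
      simp [hj]
    rw [h1] at h2
    exact Option.some_inj.mp h2
  have hpj : ∃ k : Fin u.length, j + 1 = u.get k + (k : ℕ) := by
    by_contra hnp
    rw [blk, if_neg hnp] at hfj
    exact zo_ne_z hfj
  obtain ⟨k, hk⟩ := hpj
  have hcp : (List.range j).countP
      (fun x => decide (∃ k : Fin u.length, x + 1 = u.get k + (k : ℕ))) = (k : ℕ) := by
    rw [countP_range u (fun x hx => (hbd x hx).1) (g_strictMono hsrt).injective]
    have hmono := g_strictMono (u := u) hsrt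
    have hIio : (Finset.univ.filter (fun k' : Fin u.length => u.get k' + (k' : ℕ) ≤ j))
        = Finset.Iio k := by
      ext k'
      simp only [Finset.mem_filter, Finset.mem_univ, true_and, Finset.mem_Iio]
      constructor
      · intro hle
        exact hmono.lt_iff_lt.mp
          (show u.get k' + (k' : ℕ) < u.get k + (k : ℕ) by omega)
      · intro hlt
        have hgg : u.get k' + (k' : ℕ) < u.get k + (k : ℕ) := hmono hlt
        omega
    rw [hIio, Fin.card_Iio]
  have hsum := count_zo_map u (List.range j)
  rw [hcp, ← hL₁] at hsum
  simp only [List.length_range] at hsum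
  have hgk1 : 1 ≤ u.get k := (hbd _ (u.get_mem k)).1
  have : u.get k = i + 1 := by omega
  rw [← this]
  exact u.get_mem k

end WithSorted

/-! ### Classification of supersequences -/

lemma classify : ∀ (m : ℕ) (Y : List Bool), Y.Sublist (pow01 m) →
    Y.count true + 1 = m → Y.count false = m →
    ∃ i, i < m ∧ Y = pow01 i ++ false :: pow01 (m - 1 - i)
  | 0, Y, _, h1, _ => by omega
  | m + 1, Y, hsub, h1, h2 => by
    rw [pow01_succ] at hsub
    cases hsub with
    | cons _ h =>
      exfalso
      have := h.count_le false
      simp [List.count_cons, count_false_pow01] at this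
      omega
    | cons_cons _ h =>
      rename_i l₁
      rw [List.count_cons_of_ne (by decide : false ≠ true)] at h1
      rw [List.count_cons_self] at h2
      cases h with
      | cons _ h2' =>
        -- l₁ <+ pow01 m with full counts
        have hlen : l₁.length = (pow01 m).length := by
          rw [length_eq_counts, length_pow01]
          have ht := h2'.count_le true
          have hf := h2'.count_le false
          rw [count_true_pow01] at ht
          rw [count_false_pow01] at hf
          omega
        have : l₁ = pow01 m := h2'.eq_of_length hlen
        subst this
        exact ⟨0, by omega, by simp [pow01_zero]⟩
      | cons_cons _ h2' =>
        rename_i l₂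
        rw [List.count_cons_self] at h1
        rw [List.count_cons_of_ne (by decide : true ≠ false)] at h2
        obtain ⟨i, him, hEq⟩ := classify m l₂ h2' (by omega) (by omega)
        refine ⟨i + 1, by omega, ?_⟩
        have harith : m + 1 - 1 - (i + 1) = m - 1 - i := by omega
        rw [harith, pow01_succ, List.cons_append, List.cons_append, hEq]

end Stmt14Aux

open Stmt14Aux in
/-- if H = ({1,...,n}, 𝓔), n ≥ 2, has no vertex belonging to
every hyperedge, then (01)^{n−1} is a maximal common subsequence of S(H). -/
theorem stmt_14 (n : ℕ) (hn : 2 ≤ n) (𝓔 : Finset (Finset ℕ))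
    (hE : ∀ E ∈ 𝓔, E ⊆ Finset.Icc 1 n ∧ E.Nonempty)
    (hcover : ∀ v ∈ Finset.Icc 1 n, ∃ E ∈ 𝓔, v ∉ E) :
    IsMCS (SH n 𝓔) (pow01 (n - 1)) := by
  classical
  have h1n : (1 : ℕ) ≤ n := by omega
  have hbd : ∀ E ∈ 𝓔, ∀ x ∈ E.sort (· ≤ ·), 1 ≤ x ∧ x ≤ n := by
    intro E hEm x hx
    have := (hE E hEm).1 ((Finset.mem_sort (· ≤ ·)).mp hx)
    simpa using Finset.mem_Icc.mp this
  constructor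
  · intro S hS
    rcases Set.mem_insert_iff.mp hS with rfl | ⟨E, hEm, rfl⟩
    · have h : pow01 n = pow01 (n - 1) ++ pow01 1 := by
        rw [← pow01_append]
        congr 1
        omega
      rw [h]
      exact List.sublist_append_left _ _
    · exact pow01_sublist_SE h1n (Finset.sortedLT_sort E).pairwise (hbd E hEm)
  · intro Y hYcs hsubY
    have hY0 : Y.Sublist (pow01 n) := hYcs _ (Set.mem_insert _ _)
    obtain ⟨E₁, hE₁, _⟩ := hcover 1 (by simp [Finset.mem_Icc]; omega)
    have hY1 : Y.Sublist (SE n (E₁.sort (· ≤ ·))) :=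
      hYcs _ (Set.mem_insert_iff.mpr (Or.inr ⟨E₁, hE₁, rfl⟩))
    have hct_le : Y.count true ≤ n - 1 := by
      have := hY1.count_le true
      rwa [count_true_SE h1n (Finset.sortedLT_sort E₁).pairwise (hbd E₁ hE₁)] at this
    have hct_ge : n - 1 ≤ Y.count true := by
      have := hsubY.count_le true
      rwa [count_true_pow01] at this
    have hcf_le : Y.count false ≤ n := by
      have := hY0.count_le false
      rwa [count_false_pow01] at this
    have hcf_ge : n - 1 ≤ Y.count false := by
      have := hsubY.count_le false
      rwa [count_false_pow01] at this
    rcases Nat.lt_or_ge (Y.count false) n with hlt | hge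
    · -- Y.count false = n - 1 : lengths equal
      refine (hsubY.eq_of_length ?_).symm
      rw [length_pow01, length_eq_counts]
      omega
    · -- Y.count false = n : classification and contradiction
      exfalso
      obtain ⟨i, hin, hYeq⟩ := classify n Y hY0 (by omega) (by omega)
      obtain ⟨E, hEm2, hvE⟩ := hcover (i + 1) (by simp [Finset.mem_Icc]; omega)
      have hsE : (pow01 i ++ false :: pow01 (n - 1 - i)).Sublist (SE n (E.sort (· ≤ ·))) := by
        rw [← hYeq]
        exact hYcs _ (Set.mem_insert_iff.mpr (Or.inr ⟨E, hEm2, rfl⟩))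
      have hmem : (i + 1) ∈ E.sort (· ≤ ·) :=
        mem_of_sub h1n (Finset.sortedLT_sort E).pairwise (hbd E hEm2) i (n - 1 - i) (by omega) hsE
      exact hvE ((Finset.mem_sort (· ≤ ·)).mp hmem)
end
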